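/- arXiv:2102.05014 — 8 statements merged into one kernel-verified Lean document; each statement's English description precedes it below -/
import Mathlib

section
/- Let S ⊂ ℝ^n̄ be compact and let U(x⃗) = {u ∈ ℝ^m : A(x⃗)u ≤ b(x⃗)} where A : ℝ^n̄ → ℝ^{q×m} and b : ℝ^n̄ → ℝ^q are locally Lipschitz. Suppose that for every x⃗ ∈ S the interior {u : A(x⃗)u < b(x⃗)} is nonempty and U(x⃗) is uniformly compact near x⃗ (i.e., there is a neighborhood N of x⃗ such that the closure of ⋃_{x'∈N} U(x') is compact). Let c : ℝ^n̄ → ℝ^{1×m} and d : ℝ^n̄ → ℝ be locally Lipschitz. Then the value functions γ^min(x⃗) = min_{u ∈ U(x⃗)} [d(x⃗) + c(x⃗)u] and γ^max(x⃗) = max_{u ∈ U(x⃗)} [d(x⃗) + c(x⃗)u] are locally Lipschitz continuous on S. -/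
set_option autoImplicit false
set_option maxHeartbeats 1000000

open Set


lemma coord_abs_le_norm {m : ℕ} (u : EuclideanSpace ℝ (Fin m)) (k : Fin m) : |u k| ≤ ‖u‖ := by
  have h : ‖u k‖ ≤ ‖u‖ := by
    rw [EuclideanSpace.norm_eq, Real.norm_eq_abs, ← Real.sqrt_sq_eq_abs]
    apply Real.sqrt_le_sqrt
    have := Finset.single_le_sum (f := fun i => ‖u i‖ ^ 2) (fun i _ => by positivity)
        (Finset.mem_univ k)
    simpa [Real.norm_eq_abs, sq_abs] using this
  simpa using h

lemma key_est (n m q : ℕ)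
    (A : EuclideanSpace ℝ (Fin n) → Fin q → Fin m → ℝ)
    (b : EuclideanSpace ℝ (Fin n) → Fin q → ℝ)
    (hA : LocallyLipschitz A) (hb : LocallyLipschitz b)
    (U : EuclideanSpace ℝ (Fin n) → Set (EuclideanSpace ℝ (Fin m)))
    (hU : ∀ x, U x = {u : EuclideanSpace ℝ (Fin m) | ∀ j, ∑ k, A x j k * u k ≤ b x j})
    (c : EuclideanSpace ℝ (Fin n) → EuclideanSpace ℝ (Fin m))
    (d : EuclideanSpace ℝ (Fin n) → ℝ)
    (hc : LocallyLipschitz c) (hd : LocallyLipschitz d)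
    (x₀ : EuclideanSpace ℝ (Fin n))
    (hint₀ : ∃ u : EuclideanSpace ℝ (Fin m), ∀ j, ∑ k, A x₀ j k * u k < b x₀ j)
    (hcomp₀ : ∃ N ∈ nhds x₀, IsCompact (closure (⋃ x' ∈ N, U x'))) :
    ∃ K : ℝ, 0 ≤ K ∧ ∃ r > 0, ∀ x ∈ Metric.ball x₀ r, ∀ y ∈ Metric.ball x₀ r,
      (sInf ((fun u : EuclideanSpace ℝ (Fin m) => d y + ∑ k, c y k * u k) '' U y) ≤
        sInf ((fun u : EuclideanSpace ℝ (Fin m) => d x + ∑ k, c x k * u k) '' U x) + K * dist x y) ∧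
      (sSup ((fun u : EuclideanSpace ℝ (Fin m) => d x + ∑ k, c x k * u k) '' U x) ≤
        sSup ((fun u : EuclideanSpace ℝ (Fin m) => d y + ∑ k, c y k * u k) '' U y) + K * dist x y) := by
  obtain ⟨u₀, hu₀⟩ := hint₀
  obtain ⟨N, hN, hK₀⟩ := hcomp₀
  obtain ⟨ε, hεpos, hεle⟩ : ∃ ε > 0, ∀ j, ∑ k, A x₀ j k * u₀ k + ε ≤ b x₀ j := by
    rcases isEmpty_or_nonempty (Fin q) with h | h
    · exact ⟨1, one_pos, fun j => isEmptyElim j⟩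
    · obtain ⟨j₀, _, hj₀⟩ := Finset.exists_min_image Finset.univ
        (fun j => b x₀ j - ∑ k, A x₀ j k * u₀ k) ⟨h.some, Finset.mem_univ _⟩
      refine ⟨b x₀ j₀ - ∑ k, A x₀ j₀ k * u₀ k, ?_, ?_⟩
      · linarith [hu₀ j₀]
      · intro j
        have := hj₀ j (Finset.mem_univ j)
        linarith
  obtain ⟨KA, tA, htA, hLA⟩ := hA x₀
  obtain ⟨Kb, tb, htb, hLb⟩ := hb x₀
  obtain ⟨Kc, tc, htc, hLc⟩ := hc x₀
  obtain ⟨Kd, td, htd, hLd⟩ := hd x₀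
  have hmem : N ∩ tA ∩ tb ∩ tc ∩ td ∈ nhds x₀ :=
    Filter.inter_mem (Filter.inter_mem (Filter.inter_mem (Filter.inter_mem hN htA) htb) htc) htd
  obtain ⟨r₀, hr₀pos, hr₀sub⟩ := Metric.mem_nhds_iff.mp hmem
  obtain ⟨R₁, hR₁⟩ := hK₀.isBounded.subset_closedBall 0
  set R : ℝ := max R₁ (max ‖u₀‖ 0) with hRdef
  have hR0 : 0 ≤ R := le_max_of_le_right (le_max_right _ _)
  have hRu₀ : ‖u₀‖ ≤ R := le_max_of_le_right (le_max_left _ _)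
  have hRK : ∀ u ∈ closure (⋃ x' ∈ N, U x'), ‖u‖ ≤ R := by
    intro u hu
    have := hR₁ hu
    rw [Metric.mem_closedBall, dist_zero_right] at this
    exact this.trans (le_max_left _ _)
  set M : ℝ := (KA : ℝ) * (m * R) + (Kb : ℝ) + 1 with hMdef
  have hM1 : 1 ≤ M := by
    have h1 : (0:ℝ) ≤ (KA : ℝ) * (m * R) := by positivity
    have h2 : (0:ℝ) ≤ (Kb : ℝ) := Kb.coe_nonneg
    simp only [hMdef]; linarith
  have hM0 : 0 < M := lt_of_lt_of_le one_pos hM1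
  set Cc : ℝ := ‖c x₀‖ + (Kc : ℝ) * r₀ + 1 with hCcdef
  have hCc0 : 0 ≤ Cc := by
    have : (0:ℝ) ≤ (Kc : ℝ) * r₀ := mul_nonneg Kc.coe_nonneg hr₀pos.le
    simp only [hCcdef]; positivity
  set Ktot : ℝ := (Kd : ℝ) + (Kc : ℝ) * (m * R) + (2 * M / ε) * (Cc * (m * (2 * R))) with hKtotdef
  have hKtot0 : 0 ≤ Ktot := by
    have h1 : (0:ℝ) ≤ (Kd : ℝ) := Kd.coe_nonneg
    have h2 : (0:ℝ) ≤ (Kc : ℝ) * (m * R) := by positivity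
    have h3 : (0:ℝ) ≤ (2 * M / ε) * (Cc * (m * (2 * R))) := by
      apply mul_nonneg (div_nonneg (by linarith) hεpos.le)
      positivity
    simp only [hKtotdef]; linarith
  set r : ℝ := min r₀ (ε / (8 * M)) with hrdef
  have hrpos : 0 < r := lt_min hr₀pos (div_pos hεpos (by linarith))
  have hrr₀ : r ≤ r₀ := min_le_left _ _
  have hrM : 8 * M * r ≤ ε := by
    have h : r ≤ ε / (8 * M) := min_le_right _ _
    rw [le_div_iff₀ (by linarith : (0:ℝ) < 8 * M)] at h
    linarith
  have hsub : Metric.ball x₀ r ⊆ N ∩ tA ∩ tb ∩ tc ∩ td :=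
    (Metric.ball_subset_ball hrr₀).trans hr₀sub
  have hx₀ball : x₀ ∈ Metric.ball x₀ r := Metric.mem_ball_self hrpos
  -- componentwise Lipschitz estimates
  have hAxy : ∀ x ∈ Metric.ball x₀ r, ∀ y ∈ Metric.ball x₀ r, ∀ j k,
      |A x j k - A y j k| ≤ (KA : ℝ) * dist x y := by
    intro x hx y hy j k
    have hx' : x ∈ tA := ((hsub hx).1.1.1).2
    have hy' : y ∈ tA := ((hsub hy).1.1.1).2
    have h1 := (lipschitzOnWith_iff_dist_le_mul.mp hLA) x hx' y hy'
    calc |A x j k - A y j k| = dist (A x j k) (A y j k) := (Real.dist_eq _ _).symm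
      _ ≤ dist (A x j) (A y j) := dist_le_pi_dist _ _ k
      _ ≤ dist (A x) (A y) := dist_le_pi_dist _ _ j
      _ ≤ (KA : ℝ) * dist x y := h1
  have hbxy : ∀ x ∈ Metric.ball x₀ r, ∀ y ∈ Metric.ball x₀ r, ∀ j,
      |b x j - b y j| ≤ (Kb : ℝ) * dist x y := by
    intro x hx y hy j
    have hx' : x ∈ tb := ((hsub hx).1.1).2
    have hy' : y ∈ tb := ((hsub hy).1.1).2
    have h1 := (lipschitzOnWith_iff_dist_le_mul.mp hLb) x hx' y hy'
    calc |b x j - b y j| = dist (b x j) (b y j) := (Real.dist_eq _ _).symm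
      _ ≤ dist (b x) (b y) := dist_le_pi_dist _ _ j
      _ ≤ (Kb : ℝ) * dist x y := h1
  have hcxy : ∀ x ∈ Metric.ball x₀ r, ∀ y ∈ Metric.ball x₀ r, ∀ k,
      |c x k - c y k| ≤ (Kc : ℝ) * dist x y := by
    intro x hx y hy k
    have hx' : x ∈ tc := ((hsub hx).1).2
    have hy' : y ∈ tc := ((hsub hy).1).2
    have h1 := (lipschitzOnWith_iff_dist_le_mul.mp hLc) x hx' y hy'
    calc |c x k - c y k| = |(c x - c y) k| := by
          simp [PiLp.sub_apply]
      _ ≤ ‖c x - c y‖ := coord_abs_le_norm _ _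
      _ = dist (c x) (c y) := (dist_eq_norm _ _).symm
      _ ≤ (Kc : ℝ) * dist x y := h1
  have hdxy : ∀ x ∈ Metric.ball x₀ r, ∀ y ∈ Metric.ball x₀ r,
      |d x - d y| ≤ (Kd : ℝ) * dist x y := by
    intro x hx y hy
    have hx' : x ∈ td := (hsub hx).2
    have hy' : y ∈ td := (hsub hy).2
    have h1 := (lipschitzOnWith_iff_dist_le_mul.mp hLd) x hx' y hy'
    calc |d x - d y| = dist (d x) (d y) := (Real.dist_eq _ _).symm
      _ ≤ (Kd : ℝ) * dist x y := h1
  -- perturbation estimate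
  have hg : ∀ x ∈ Metric.ball x₀ r, ∀ y ∈ Metric.ball x₀ r,
      ∀ v : EuclideanSpace ℝ (Fin m), (∀ k, |v k| ≤ R) → ∀ j,
      (∑ k, A x j k * v k - b x j) - (∑ k, A y j k * v k - b y j) ≤ M * dist x y := by
    intro x hx y hy v hv j
    have hsumeq : ∑ k, A x j k * v k - ∑ k, A y j k * v k = ∑ k, (A x j k - A y j k) * v k := by
      rw [← Finset.sum_sub_distrib]
      exact Finset.sum_congr rfl fun k _ => by ring
    have hsum_abs : |∑ k, (A x j k - A y j k) * v k| ≤ (m : ℝ) * ((KA : ℝ) * dist x y * R) := by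
      calc |∑ k, (A x j k - A y j k) * v k| ≤ ∑ k, |(A x j k - A y j k) * v k| :=
            Finset.abs_sum_le_sum_abs _ _
        _ ≤ ∑ _k : Fin m, (KA : ℝ) * dist x y * R := by
            apply Finset.sum_le_sum
            intro k _
            rw [abs_mul]
            exact mul_le_mul (hAxy x hx y hy j k) (hv k) (abs_nonneg _)
              (mul_nonneg KA.coe_nonneg dist_nonneg)
        _ = (m : ℝ) * ((KA : ℝ) * dist x y * R) := by
            rw [Finset.sum_const, Finset.card_univ, Fintype.card_fin, nsmul_eq_mul]
    have hb1 := hbxy x hx y hy j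
    have habs1 := abs_le.mp hsum_abs
    have habs2 := abs_le.mp hb1
    have hD0 : (0:ℝ) ≤ dist x y := dist_nonneg
    have hMge : ((KA : ℝ) * (m * R) + (Kb : ℝ)) * dist x y ≤ M * dist x y := by
      apply mul_le_mul_of_nonneg_right _ hD0
      simp only [hMdef]; linarith
    nlinarith [habs1.2, habs2.2]
  -- Slater margin
  have hSl : ∀ x ∈ Metric.ball x₀ r, ∀ j, ∑ k, A x j k * u₀ k ≤ b x j - ε / 2 := by
    intro x hx j
    have h2 := hg x hx x₀ hx₀ball u₀ (fun k => (coord_abs_le_norm u₀ k).trans hRu₀) j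
    have h3 := hεle j
    have hdx : dist x x₀ < r := Metric.mem_ball.mp hx
    have h4 : M * dist x x₀ ≤ M * r := mul_le_mul_of_nonneg_left hdx.le hM0.le
    nlinarith
  have hu₀U : ∀ x ∈ Metric.ball x₀ r, u₀ ∈ U x := by
    intro x hx
    rw [hU]
    intro j
    have := hSl x hx j
    linarith
  have hUR : ∀ x ∈ Metric.ball x₀ r, ∀ u ∈ U x, ‖u‖ ≤ R := by
    intro x hx u hu
    apply hRK
    apply subset_closure
    exact mem_biUnion ((hsub hx).1.1.1).1 hu
  have hcb : ∀ x ∈ Metric.ball x₀ r, ∀ k, |c x k| ≤ Cc := by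
    intro x hx k
    have h1 := hcxy x hx x₀ hx₀ball k
    have h2 := coord_abs_le_norm (c x₀) k
    have hdx : dist x x₀ < r := Metric.mem_ball.mp hx
    have h3 : (Kc : ℝ) * dist x x₀ ≤ (Kc : ℝ) * r₀ :=
      mul_le_mul_of_nonneg_left (by linarith) Kc.coe_nonneg
    have h4 : |c x k| ≤ |c x₀ k| + |c x k - c x₀ k| := by
      calc |c x k| = |c x₀ k + (c x k - c x₀ k)| := by ring_nf
        _ ≤ |c x₀ k| + |c x k - c x₀ k| := abs_add_le _ _
    simp only [hCcdef]
    linarith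
  -- core perturbation
  have hcore : ∀ x ∈ Metric.ball x₀ r, ∀ y ∈ Metric.ball x₀ r, ∀ u ∈ U x, ∃ u' ∈ U y,
      |(d y + ∑ k, c y k * u' k) - (d x + ∑ k, c x k * u k)| ≤ Ktot * dist x y := by
    intro x hx y hy u hu
    have hD0 : (0:ℝ) ≤ dist x y := dist_nonneg
    have hDlt : dist x y < 2 * r := by
      have h1 : dist x y ≤ dist x x₀ + dist x₀ y := dist_triangle _ _ _
      have h2 : dist x x₀ < r := Metric.mem_ball.mp hx
      have h3 : dist x₀ y < r := by rw [dist_comm]; exact Metric.mem_ball.mp hy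
      linarith
    set D : ℝ := dist x y with hDdef
    set t : ℝ := 2 * M * D / ε with htdef
    have ht0 : 0 ≤ t := div_nonneg (mul_nonneg (by linarith) hD0) hεpos.le
    have ht1 : t ≤ 1 := by
      rw [htdef, div_le_one hεpos]
      have h5 : 2 * M * D ≤ 2 * M * (2 * r) :=
        mul_le_mul_of_nonneg_left hDlt.le (by linarith)
      linarith
    set u' : EuclideanSpace ℝ (Fin m) := u + t • (u₀ - u) with hu'def
    have hu'k : ∀ k, u' k = (1 - t) * u k + t * u₀ k := by
      intro k
      simp only [hu'def, PiLp.add_apply, PiLp.smul_apply, PiLp.sub_apply, smul_eq_mul]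
      ring
    have huR : ∀ k, |u k| ≤ R := fun k => (coord_abs_le_norm u k).trans (hUR x hx u hu)
    have hu₀R : ∀ k, |u₀ k| ≤ R := fun k => (coord_abs_le_norm u₀ k).trans hRu₀
    have hu'R : ∀ k, |u' k| ≤ R := by
      intro k
      rw [hu'k]
      calc |(1 - t) * u k + t * u₀ k| ≤ |(1 - t) * u k| + |t * u₀ k| := abs_add_le _ _
        _ = (1 - t) * |u k| + t * |u₀ k| := by
            rw [abs_mul, abs_mul, abs_of_nonneg (by linarith : (0:ℝ) ≤ 1 - t),
              abs_of_nonneg ht0]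
        _ ≤ (1 - t) * R + t * R := by
            apply add_le_add
            · exact mul_le_mul_of_nonneg_left (huR k) (by linarith)
            · exact mul_le_mul_of_nonneg_left (hu₀R k) ht0
        _ = R := by ring
    have hsum : ∀ j, ∑ k, A x j k * u' k =
        (1 - t) * (∑ k, A x j k * u k) + t * (∑ k, A x j k * u₀ k) := by
      intro j
      rw [Finset.mul_sum, Finset.mul_sum, ← Finset.sum_add_distrib]
      exact Finset.sum_congr rfl fun k _ => by rw [hu'k]; ring
    have hfeas : ∀ j, ∑ k, A x j k * u k ≤ b x j := by
      rw [hU] at hu; exact hu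
    have hu'U : u' ∈ U y := by
      rw [hU]
      intro j
      have hgle := hg y hy x hx u' hu'R j
      rw [dist_comm y x] at hgle
      have hsl := hSl x hx j
      have hMD : t * (ε / 2) = M * D := by
        rw [htdef]; field_simp
      have hx1 : (1 - t) * (∑ k, A x j k * u k) ≤ (1 - t) * b x j :=
        mul_le_mul_of_nonneg_left (hfeas j) (by linarith)
      have hx2 : t * (∑ k, A x j k * u₀ k) ≤ t * (b x j - ε / 2) :=
        mul_le_mul_of_nonneg_left (hsl) ht0
      have hAxu' : ∑ k, A x j k * u' k - b x j ≤ -(M * D) := by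
        rw [hsum j]
        nlinarith
      linarith
    refine ⟨u', hu'U, ?_⟩
    -- value estimate
    have h1 : |d y - d x| ≤ (Kd : ℝ) * D := by
      have := hdxy y hy x hx
      rwa [dist_comm y x] at this
    have h2 : |∑ k, c y k * u' k - ∑ k, c x k * u' k| ≤ (m : ℝ) * ((Kc : ℝ) * D * R) := by
      have heq : ∑ k, c y k * u' k - ∑ k, c x k * u' k = ∑ k, (c y k - c x k) * u' k := by
        rw [← Finset.sum_sub_distrib]
        exact Finset.sum_congr rfl fun k _ => by ring
      rw [heq]
      calc |∑ k, (c y k - c x k) * u' k| ≤ ∑ k, |(c y k - c x k) * u' k| :=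
            Finset.abs_sum_le_sum_abs _ _
        _ ≤ ∑ _k : Fin m, (Kc : ℝ) * D * R := by
            apply Finset.sum_le_sum
            intro k _
            rw [abs_mul]
            have hcyx : |c y k - c x k| ≤ (Kc : ℝ) * D := by
              have := hcxy y hy x hx k
              rwa [dist_comm y x] at this
            exact mul_le_mul hcyx (hu'R k) (abs_nonneg _)
              (mul_nonneg Kc.coe_nonneg hD0)
        _ = (m : ℝ) * ((Kc : ℝ) * D * R) := by
            rw [Finset.sum_const, Finset.card_univ, Fintype.card_fin, nsmul_eq_mul]
    have h3 : |∑ k, c x k * u' k - ∑ k, c x k * u k| ≤ (m : ℝ) * (Cc * (t * (2 * R))) := by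
      have heq : ∑ k, c x k * u' k - ∑ k, c x k * u k = ∑ k, c x k * (t * (u₀ k - u k)) := by
        rw [← Finset.sum_sub_distrib]
        refine Finset.sum_congr rfl fun k _ => ?_
        rw [hu'k]; ring
      rw [heq]
      calc |∑ k, c x k * (t * (u₀ k - u k))| ≤ ∑ k, |c x k * (t * (u₀ k - u k))| :=
            Finset.abs_sum_le_sum_abs _ _
        _ ≤ ∑ _k : Fin m, Cc * (t * (2 * R)) := by
            apply Finset.sum_le_sum
            intro k _
            rw [abs_mul, abs_mul]
            have hd1 : |u₀ k - u k| ≤ 2 * R := by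
              have := abs_sub (u₀ k) (u k)
              calc |u₀ k - u k| ≤ |u₀ k| + |u k| := abs_sub _ _
                _ ≤ 2 * R := by linarith [hu₀R k, huR k]
            have ht' : |t| = t := abs_of_nonneg ht0
            rw [ht']
            apply mul_le_mul (hcb x hx k) _ (by positivity) hCc0
            exact mul_le_mul_of_nonneg_left hd1 ht0
        _ = (m : ℝ) * (Cc * (t * (2 * R))) := by
            rw [Finset.sum_const, Finset.card_univ, Fintype.card_fin, nsmul_eq_mul]
    have heq3 : (m : ℝ) * (Cc * (t * (2 * R))) = (2 * M / ε) * (Cc * (m * (2 * R))) * D := by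
      rw [htdef]; field_simp
    have habs1 := abs_le.mp h1
    have habs2 := abs_le.mp h2
    have habs3 := abs_le.mp h3
    have hKeq : Ktot * D = (Kd : ℝ) * D + (Kc : ℝ) * (m * R) * D +
        (2 * M / ε) * (Cc * (m * (2 * R))) * D := by
      rw [hKtotdef]; ring
    have hr1 : (m : ℝ) * ((Kc : ℝ) * D * R) = (Kc : ℝ) * ((m : ℝ) * R) * D := by ring
    clear_value R M Cc Ktot r D t u'
    rw [abs_le]
    constructor <;>
      linarith [habs1.1, habs1.2, habs2.1, habs2.2, habs3.1, habs3.2]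
  -- boundedness
  set B : ℝ := |d x₀| + (Kd : ℝ) * r₀ + (m : ℝ) * (Cc * R) with hBdef
  have hvalB : ∀ x ∈ Metric.ball x₀ r, ∀ u ∈ U x, |d x + ∑ k, c x k * u k| ≤ B := by
    intro x hx u hu
    have h1 : |d x| ≤ |d x₀| + (Kd : ℝ) * r₀ := by
      have h2 := hdxy x hx x₀ hx₀ball
      have hdx : dist x x₀ < r := Metric.mem_ball.mp hx
      have h3 : (Kd : ℝ) * dist x x₀ ≤ (Kd : ℝ) * r₀ :=
        mul_le_mul_of_nonneg_left (by linarith) Kd.coe_nonneg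
      have h4 : |d x| ≤ |d x₀| + |d x - d x₀| := by
        calc |d x| = |d x₀ + (d x - d x₀)| := by ring_nf
          _ ≤ |d x₀| + |d x - d x₀| := abs_add_le _ _
      linarith
    have huR : ∀ k, |u k| ≤ R := fun k => (coord_abs_le_norm u k).trans (hUR x hx u hu)
    have h5 : |∑ k, c x k * u k| ≤ (m : ℝ) * (Cc * R) := by
      calc |∑ k, c x k * u k| ≤ ∑ k, |c x k * u k| := Finset.abs_sum_le_sum_abs _ _
        _ ≤ ∑ _k : Fin m, Cc * R := by
            apply Finset.sum_le_sum
            intro k _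
            rw [abs_mul]
            exact mul_le_mul (hcb x hx k) (huR k) (abs_nonneg _) hCc0
        _ = (m : ℝ) * (Cc * R) := by
            rw [Finset.sum_const, Finset.card_univ, Fintype.card_fin, nsmul_eq_mul]
    calc |d x + ∑ k, c x k * u k| ≤ |d x| + |∑ k, c x k * u k| := abs_add_le _ _
      _ ≤ B := by simp only [hBdef]; linarith
  have hne : ∀ x ∈ Metric.ball x₀ r,
      ((fun u : EuclideanSpace ℝ (Fin m) => d x + ∑ k, c x k * u k) '' U x).Nonempty :=
    fun x hx => ⟨_, mem_image_of_mem _ (hu₀U x hx)⟩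
  have hbddB : ∀ x ∈ Metric.ball x₀ r,
      BddBelow ((fun u : EuclideanSpace ℝ (Fin m) => d x + ∑ k, c x k * u k) '' U x) := by
    intro x hx
    refine ⟨-B, ?_⟩
    rintro v ⟨u, hu, rfl⟩
    show -B ≤ d x + ∑ k, c x k * u k
    have := abs_le.mp (hvalB x hx u hu)
    linarith [this.1]
  have hbddA : ∀ x ∈ Metric.ball x₀ r,
      BddAbove ((fun u : EuclideanSpace ℝ (Fin m) => d x + ∑ k, c x k * u k) '' U x) := by
    intro x hx
    refine ⟨B, ?_⟩
    rintro v ⟨u, hu, rfl⟩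
    show d x + ∑ k, c x k * u k ≤ B
    exact (abs_le.mp (hvalB x hx u hu)).2
  refine ⟨Ktot, hKtot0, r, hrpos, ?_⟩
  intro x hx y hy
  constructor
  · have hb1 : ∀ v ∈ (fun u : EuclideanSpace ℝ (Fin m) => d x + ∑ k, c x k * u k) '' U x,
        sInf ((fun u : EuclideanSpace ℝ (Fin m) => d y + ∑ k, c y k * u k) '' U y)
          - Ktot * dist x y ≤ v := by
      rintro v ⟨u, hu, rfl⟩
      obtain ⟨u', hu', hval⟩ := hcore x hx y hy u hu
      have habs := abs_le.mp hval
      have hle : sInf ((fun u : EuclideanSpace ℝ (Fin m) => d y + ∑ k, c y k * u k) '' U y)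
          ≤ d y + ∑ k, c y k * u' k := csInf_le (hbddB y hy) (mem_image_of_mem _ hu')
      show sInf ((fun u : EuclideanSpace ℝ (Fin m) => d y + ∑ k, c y k * u k) '' U y)
          - Ktot * dist x y ≤ d x + ∑ k, c x k * u k
      linarith [habs.2]
    have := le_csInf (hne x hx) hb1
    linarith
  · apply csSup_le (hne x hx)
    rintro v ⟨u, hu, rfl⟩
    obtain ⟨u', hu', hval⟩ := hcore x hx y hy u hu
    have habs := abs_le.mp hval
    have hle : d y + ∑ k, c y k * u' k ≤
        sSup ((fun u : EuclideanSpace ℝ (Fin m) => d y + ∑ k, c y k * u k) '' U y) :=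
      le_csSup (hbddA y hy) (mem_image_of_mem _ hu')
    show d x + ∑ k, c x k * u k ≤
        sSup ((fun u : EuclideanSpace ℝ (Fin m) => d y + ∑ k, c y k * u k) '' U y) + Ktot * dist x y
    linarith [habs.1]


/-- **Lemma 1 of the paper.** Let `S ⊆ ℝ^n̄` be compact and
`U(x) = {u : A(x) u ≤ b(x)}` with `A, b` locally Lipschitz.  If for every `x ∈ S`
the interior `{u : A(x) u < b(x)}` is nonempty and `U` is uniformly compact near `x`
(some neighborhood `N` of `x` has `closure (⋃_{x'∈N} U(x'))` compact), and
`c, d` are locally Lipschitz, then the parametric LP value functions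
`γmin(x) = min_{u ∈ U(x)} (d x + c x ⬝ u)` and `γmax(x) = max_{u ∈ U(x)} (d x + c x ⬝ u)`
are locally Lipschitz on `S`. -/
theorem parametric_LP_value_locally_lipschitz (n m q : ℕ)
    (S : Set (EuclideanSpace ℝ (Fin n))) (hS : IsCompact S)
    (A : EuclideanSpace ℝ (Fin n) → Fin q → Fin m → ℝ)
    (b : EuclideanSpace ℝ (Fin n) → Fin q → ℝ)
    (hA : LocallyLipschitz A) (hb : LocallyLipschitz b)
    (U : EuclideanSpace ℝ (Fin n) → Set (EuclideanSpace ℝ (Fin m)))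
    (hU : ∀ x, U x = {u : EuclideanSpace ℝ (Fin m) | ∀ j, ∑ k, A x j k * u k ≤ b x j})
    (hint : ∀ x ∈ S, ∃ u : EuclideanSpace ℝ (Fin m), ∀ j, ∑ k, A x j k * u k < b x j)
    (hcomp : ∀ x ∈ S, ∃ N ∈ nhds x, IsCompact (closure (⋃ x' ∈ N, U x')))
    (c : EuclideanSpace ℝ (Fin n) → EuclideanSpace ℝ (Fin m))
    (d : EuclideanSpace ℝ (Fin n) → ℝ)
    (hc : LocallyLipschitz c) (hd : LocallyLipschitz d) :
    LocallyLipschitzOn S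
        (fun x => sInf ((fun u : EuclideanSpace ℝ (Fin m) => d x + ∑ k, c x k * u k) '' U x)) ∧
      LocallyLipschitzOn S
        (fun x => sSup ((fun u : EuclideanSpace ℝ (Fin m) => d x + ∑ k, c x k * u k) '' U x)) := by
  constructor
  · intro x₀ hx₀
    obtain ⟨K, hK0, r, hrpos, hest⟩ :=
      key_est n m q A b hA hb U hU c d hc hd x₀ (hint x₀ hx₀) (hcomp x₀ hx₀)
    refine ⟨⟨K, hK0⟩, Metric.ball x₀ r,
      mem_nhdsWithin_of_mem_nhds (Metric.ball_mem_nhds _ hrpos), ?_⟩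
    apply lipschitzOnWith_iff_dist_le_mul.mpr
    intro x hx y hy
    rw [Real.dist_eq]; change _ ≤ K * dist x y
    rw [abs_sub_le_iff]
    constructor
    · have h := (hest y hy x hx).1
      rw [dist_comm y x] at h
      linarith
    · have h := (hest x hx y hy).1
      linarith
  · intro x₀ hx₀
    obtain ⟨K, hK0, r, hrpos, hest⟩ :=
      key_est n m q A b hA hb U hU c d hc hd x₀ (hint x₀ hx₀) (hcomp x₀ hx₀)
    refine ⟨⟨K, hK0⟩, Metric.ball x₀ r,
      mem_nhdsWithin_of_mem_nhds (Metric.ball_mem_nhds _ hrpos), ?_⟩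
    apply lipschitzOnWith_iff_dist_le_mul.mpr
    intro x hx y hy
    rw [Real.dist_eq]; change _ ≤ K * dist x y
    rw [abs_sub_le_iff]
    constructor
    · have h := (hest x hx y hy).2
      linarith
    · have h := (hest y hy x hx).2
      rw [dist_comm y x] at h
      linarith
end

section
/- Let T > 0, let w : [0, T] → ℝ be differentiable, and let α : ℝ → ℝ be a locally Lipschitz extended class-K∞ function (α is strictly increasing and α(0) = 0). If w(0) ≤ 0 and w'(t) ≤ −α(w(t)) for all t ∈ [0, T], then w(t) ≤ 0 for all t ∈ [0, T]. -/
set_option autoImplicit false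

open Set

/-- **Nagumo-type comparison.** If `w : [0,T] → ℝ` is differentiable,
`α` is a locally Lipschitz extended class-K∞ function (strictly increasing with
`α(0) = 0`), `w(0) ≤ 0` and `w'(t) ≤ −α(w(t))` on `[0,T]`, then `w(t) ≤ 0` on `[0,T]`. -/
theorem comparison_nonpositive (T : ℝ) (hT : 0 < T) (w w' : ℝ → ℝ) (α : ℝ → ℝ)
    (hα_lip : LocallyLipschitz α) (hα_mono : StrictMono α) (hα0 : α 0 = 0)
    (hderiv : ∀ t ∈ Icc (0 : ℝ) T, HasDerivWithinAt w (w' t) (Icc (0 : ℝ) T) t)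
    (hineq : ∀ t ∈ Icc (0 : ℝ) T, w' t ≤ -α (w t))
    (h0 : w 0 ≤ 0) :
    ∀ t ∈ Icc (0 : ℝ) T, w t ≤ 0 := by
  have hcont : ContinuousOn w (Icc (0 : ℝ) T) :=
    fun u hu => (hderiv u hu).continuousWithinAt
  rintro t ⟨ht0, htT⟩
  by_contra hpos
  push_neg at hpos
  set S : Set ℝ := Icc (0 : ℝ) t ∩ w ⁻¹' Iic 0 with hS
  have h0S : (0 : ℝ) ∈ S := ⟨⟨le_refl 0, ht0⟩, h0⟩
  have hne : S.Nonempty := ⟨0, h0S⟩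
  have hbdd : BddAbove S := ⟨t, fun u hu => hu.1.2⟩
  set s := sSup S with hs
  have hsub : Icc (0 : ℝ) t ⊆ Icc (0 : ℝ) T := Icc_subset_Icc le_rfl htT
  have hSclosed : IsClosed S := by
    apply ContinuousOn.preimage_isClosed_of_isClosed (hcont.mono hsub) isClosed_Icc isClosed_Iic
  have hsS : s ∈ S := hSclosed.csSup_mem hne hbdd
  have hs0 : 0 ≤ s := hsS.1.1
  have hst : s ≤ t := hsS.1.2
  have hws : w s ≤ 0 := hsS.2
  -- on (s, t], w > 0
  have hwpos : ∀ u, s < u → u ≤ t → 0 < w u := by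
    intro u hsu hut
    by_contra h
    push_neg at h
    have : u ∈ S := ⟨⟨hs0.trans hsu.le, hut⟩, h⟩
    exact absurd (le_csSup hbdd this) (not_le.mpr hsu)
  -- w is antitone on [s, t]
  have hanti : AntitoneOn w (Icc s t) := by
    have hIcc : Icc s t ⊆ Icc (0 : ℝ) T := Icc_subset_Icc hs0 htT
    have hderiv' : ∀ u ∈ interior (Icc s t), HasDerivAt w (w' u) u := by
      intro u hu
      rw [interior_Icc] at hu
      have h0u : 0 < u := lt_of_le_of_lt hs0 hu.1
      have huT : u < T := lt_of_lt_of_le hu.2 htT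
      exact (hderiv u ⟨h0u.le, huT.le⟩).hasDerivAt (Icc_mem_nhds h0u huT)
    apply antitoneOn_of_deriv_nonpos (convex_Icc s t) (hcont.mono hIcc)
    · intro u hu
      exact ((hderiv' u hu).differentiableAt).differentiableWithinAt
    · intro u hu
      rw [(hderiv' u hu).deriv]
      rw [interior_Icc] at hu
      have huI : u ∈ Icc (0 : ℝ) T :=
        ⟨hs0.trans hu.1.le, (hu.2.trans_le htT).le⟩
      have hwu : 0 < w u := hwpos u hu.1 hu.2.le
      have : (0:ℝ) < α (w u) := by
        have := hα_mono hwu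
        rwa [hα0] at this
      linarith [hineq u huI]
  have := hanti (left_mem_Icc.mpr hst) (right_mem_Icc.mpr hst) hst
  linarith
end

section
/- Suppose x⃗(t), x⃗^k ∈ S with ‖x⃗(t) − x⃗^k‖ ≤ ε(Γ), suppose the constants c_f, c_g, c_α, c_γ, c_h satisfy the five inequalities of Lemma 3 on the compact set S, and suppose ‖u_i^k‖ ≤ u_max for all i ∈ N. Then the error term e'(t, t^k) = Σ_{i∈N}(L_{f_i}h^{x_i}(x⃗(t)) − L_{f_i}h^{x_i}(x⃗^k)) + Σ_{i∈N}(L_{g_i}h^{x_i}(x⃗(t)) − L_{g_i}h^{x_i}(x⃗^k))u_i^k + Σ_{j∈A}(γ_j^max(x⃗(t)) − γ_j^max(x⃗^k)) + Σ_{l∈V} L_{φ_l}h^{x_l}(x⃗(t)) + (α(h(x⃗(t))) − α(h(x⃗^k))) satisfies ‖e'(t, t^k)‖ ≤ η(Γ), where η(Γ) = (c_f + c_g u_max + c_α + c_γ)ε(Γ) + c_h Σ_{l∈V} φ_l^max. -/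
set_option autoImplicit false

open Set

/-- Coordinate insertion of agent `i`'s state space into the stacked state space,
as a continuous linear map. -/
noncomputable def agentIns {N : ℕ} (n : Fin N → ℕ) (i : Fin N) :
    EuclideanSpace ℝ (Fin (n i)) →L[ℝ] (∀ j, EuclideanSpace ℝ (Fin (n j))) :=
  ContinuousLinearMap.pi (Pi.single i (ContinuousLinearMap.id ℝ (EuclideanSpace ℝ (Fin (n i)))))

/-- **error bound used in Theorem 1.** If `x(t), x^k ∈ S` with
`‖x(t) − x^k‖ ≤ ε(Γ) = (μ/L')(exp(L'Γ) − 1)`, the (nonnegative) constants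
`c_f, c_g, c_α, c_γ, c_h` satisfy the five inequalities of Lemma 3 on `S`, and
`‖u_i^k‖ ≤ u_max` for all normal `i`, then the error term `e'(t, t^k)` satisfies
`‖e'(t, t^k)‖ ≤ η(Γ) = (c_f + c_g u_max + c_α + c_γ) ε(Γ) + c_h Σ_l φ_l^max`. -/
theorem error_term_bound (N : ℕ) (n m : Fin N → ℕ)
    (Normal Adv : Finset (Fin N))
    (S : Set (∀ i, EuclideanSpace ℝ (Fin (n i))))
    (h : (∀ i, EuclideanSpace ℝ (Fin (n i))) → ℝ)
    (f : ∀ i, EuclideanSpace ℝ (Fin (n i)) → EuclideanSpace ℝ (Fin (n i)))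
    (g : ∀ i, EuclideanSpace ℝ (Fin (n i)) →
      (EuclideanSpace ℝ (Fin (m i)) →L[ℝ] EuclideanSpace ℝ (Fin (n i))))
    (α : ℝ → ℝ)
    (γmax : Fin N → (∀ i, EuclideanSpace ℝ (Fin (n i))) → ℝ)
    (φ : ∀ i : Fin N, ℝ → EuclideanSpace ℝ (Fin (n i))) (φmax : Fin N → ℝ)
    -- constants and data
    (cf cg cα cγ ch umax μ L' Γ : ℝ)
    (hcf : 0 ≤ cf) (hcg : 0 ≤ cg) (hcα : 0 ≤ cα) (hcγ : 0 ≤ cγ) (hch : 0 ≤ ch)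
    (humax : 0 ≤ umax) (hμ : 0 ≤ μ) (hL' : 0 < L') (hΓ : 0 ≤ Γ)
    -- the five inequalities of Lemma 3 on S
    (hLf : ∀ x₁ ∈ S, ∀ x₂ ∈ S,
      ∑ i ∈ Normal, ‖fderiv ℝ h x₁ (Pi.single i (f i (x₁ i))) -
          fderiv ℝ h x₂ (Pi.single i (f i (x₂ i)))‖ ≤ cf * ‖x₁ - x₂‖)
    (hLg : ∀ x₁ ∈ S, ∀ x₂ ∈ S,
      ∑ i ∈ Normal, ‖((fderiv ℝ h x₁).comp (agentIns n i)).comp (g i (x₁ i)) -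
          ((fderiv ℝ h x₂).comp (agentIns n i)).comp (g i (x₂ i))‖ ≤ cg * ‖x₁ - x₂‖)
    (hαlip : ∀ x₁ ∈ S, ∀ x₂ ∈ S, ‖α (h x₁) - α (h x₂)‖ ≤ cα * ‖x₁ - x₂‖)
    (hγlip : ∀ x₁ ∈ S, ∀ x₂ ∈ S, ∑ j ∈ Adv, ‖γmax j x₁ - γmax j x₂‖ ≤ cγ * ‖x₁ - x₂‖)
    (hφbound : ∀ x₁ ∈ S, ∀ t : ℝ, 0 ≤ t →
      ‖∑ l, fderiv ℝ h x₁ (Pi.single l (φ l t))‖ ≤ ch * ∑ l, φmax l)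
    -- the sampled and current states, inputs, and time
    (y xk : ∀ i, EuclideanSpace ℝ (Fin (n i))) (hy : y ∈ S) (hxk : xk ∈ S)
    (hdev : ‖y - xk‖ ≤ μ / L' * (Real.exp (L' * Γ) - 1))
    (u : ∀ i, EuclideanSpace ℝ (Fin (m i))) (hu : ∀ i ∈ Normal, ‖u i‖ ≤ umax)
    (t : ℝ) (ht : 0 ≤ t) :
    ‖(∑ i ∈ Normal, (fderiv ℝ h y (Pi.single i (f i (y i))) -
          fderiv ℝ h xk (Pi.single i (f i (xk i))))) +
      (∑ i ∈ Normal, (fderiv ℝ h y (Pi.single i (g i (y i) (u i))) -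
          fderiv ℝ h xk (Pi.single i (g i (xk i) (u i))))) +
      (∑ j ∈ Adv, (γmax j y - γmax j xk)) +
      (∑ l, fderiv ℝ h y (Pi.single l (φ l t))) +
      (α (h y) - α (h xk))‖ ≤
    (cf + cg * umax + cα + cγ) * (μ / L' * (Real.exp (L' * Γ) - 1)) +
      ch * ∑ l, φmax l := by

  classical
  set ε := μ / L' * (Real.exp (L' * Γ) - 1) with hεdef
  have hε0 : 0 ≤ ε := by
    apply mul_nonneg (div_nonneg hμ hL'.le)
    have h1 : (1:ℝ) ≤ Real.exp (L' * Γ) := by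
      rw [← Real.exp_zero]
      exact Real.exp_le_exp.mpr (mul_nonneg hL'.le hΓ)
    linarith
  have hkey : ∀ (i : Fin N) (v : EuclideanSpace ℝ (Fin (n i))),
      agentIns n i v = Pi.single i v := by
    intro i v
    funext j
    by_cases hji : j = i
    · subst hji; simp [agentIns]
    · simp [agentIns, Pi.single_eq_of_ne hji]
  have hyx : 0 ≤ ‖y - xk‖ := norm_nonneg _
  -- bound term 1
  have h1 : ‖∑ i ∈ Normal, (fderiv ℝ h y (Pi.single i (f i (y i))) -
      fderiv ℝ h xk (Pi.single i (f i (xk i))))‖ ≤ cf * ‖y - xk‖ :=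
    (norm_sum_le _ _).trans (hLf y hy xk hxk)
  -- bound term 2
  have h2 : ‖∑ i ∈ Normal, (fderiv ℝ h y (Pi.single i (g i (y i) (u i))) -
      fderiv ℝ h xk (Pi.single i (g i (xk i) (u i))))‖ ≤ cg * ‖y - xk‖ * umax := by
    calc ‖∑ i ∈ Normal, (fderiv ℝ h y (Pi.single i (g i (y i) (u i))) -
        fderiv ℝ h xk (Pi.single i (g i (xk i) (u i))))‖
        ≤ ∑ i ∈ Normal, ‖fderiv ℝ h y (Pi.single i (g i (y i) (u i))) -
            fderiv ℝ h xk (Pi.single i (g i (xk i) (u i)))‖ := norm_sum_le _ _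
      _ ≤ ∑ i ∈ Normal, ‖((fderiv ℝ h y).comp (agentIns n i)).comp (g i (y i)) -
            ((fderiv ℝ h xk).comp (agentIns n i)).comp (g i (xk i))‖ * umax := by
          apply Finset.sum_le_sum
          intro i hi
          have heq : fderiv ℝ h y (Pi.single i (g i (y i) (u i))) -
              fderiv ℝ h xk (Pi.single i (g i (xk i) (u i))) =
              (((fderiv ℝ h y).comp (agentIns n i)).comp (g i (y i)) -
               ((fderiv ℝ h xk).comp (agentIns n i)).comp (g i (xk i))) (u i) := by
            simp [ContinuousLinearMap.sub_apply, ContinuousLinearMap.comp_apply, hkey]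
          rw [heq]
          calc ‖(((fderiv ℝ h y).comp (agentIns n i)).comp (g i (y i)) -
               ((fderiv ℝ h xk).comp (agentIns n i)).comp (g i (xk i))) (u i)‖
              ≤ ‖((fderiv ℝ h y).comp (agentIns n i)).comp (g i (y i)) -
                ((fderiv ℝ h xk).comp (agentIns n i)).comp (g i (xk i))‖ * ‖u i‖ :=
                ContinuousLinearMap.le_opNorm _ _
            _ ≤ _ := mul_le_mul_of_nonneg_left (hu i hi) (norm_nonneg _)
      _ = (∑ i ∈ Normal, ‖((fderiv ℝ h y).comp (agentIns n i)).comp (g i (y i)) -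
            ((fderiv ℝ h xk).comp (agentIns n i)).comp (g i (xk i))‖) * umax := by
          rw [Finset.sum_mul]
      _ ≤ cg * ‖y - xk‖ * umax :=
          mul_le_mul_of_nonneg_right (hLg y hy xk hxk) humax
  -- bound term 3
  have h3 : ‖∑ j ∈ Adv, (γmax j y - γmax j xk)‖ ≤ cγ * ‖y - xk‖ :=
    (norm_sum_le _ _).trans (hγlip y hy xk hxk)
  -- bound term 4
  have h4 : ‖∑ l, fderiv ℝ h y (Pi.single l (φ l t))‖ ≤ ch * ∑ l, φmax l :=
    hφbound y hy t ht
  -- bound term 5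
  have h5 : ‖α (h y) - α (h xk)‖ ≤ cα * ‖y - xk‖ := hαlip y hy xk hxk
  have htri : ‖(∑ i ∈ Normal, (fderiv ℝ h y (Pi.single i (f i (y i))) -
          fderiv ℝ h xk (Pi.single i (f i (xk i))))) +
      (∑ i ∈ Normal, (fderiv ℝ h y (Pi.single i (g i (y i) (u i))) -
          fderiv ℝ h xk (Pi.single i (g i (xk i) (u i))))) +
      (∑ j ∈ Adv, (γmax j y - γmax j xk)) +
      (∑ l, fderiv ℝ h y (Pi.single l (φ l t))) +
      (α (h y) - α (h xk))‖ ≤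
      ‖∑ i ∈ Normal, (fderiv ℝ h y (Pi.single i (f i (y i))) -
          fderiv ℝ h xk (Pi.single i (f i (xk i))))‖ +
      ‖∑ i ∈ Normal, (fderiv ℝ h y (Pi.single i (g i (y i) (u i))) -
          fderiv ℝ h xk (Pi.single i (g i (xk i) (u i))))‖ +
      ‖∑ j ∈ Adv, (γmax j y - γmax j xk)‖ +
      ‖∑ l, fderiv ℝ h y (Pi.single l (φ l t))‖ +
      ‖α (h y) - α (h xk)‖ := by
    exact (norm_add_le _ _).trans (by
      gcongr <;> exact (norm_add_le _ _).trans (by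
        gcongr <;> exact (norm_add_le _ _).trans (by gcongr <;> exact norm_add_le _ _)))
  have hfin : cf * ‖y - xk‖ + cg * ‖y - xk‖ * umax + cγ * ‖y - xk‖ +
      (ch * ∑ l, φmax l) + cα * ‖y - xk‖ ≤
      (cf + cg * umax + cα + cγ) * ε + ch * ∑ l, φmax l := by
    nlinarith [mul_le_mul_of_nonneg_left hdev hcf,
      mul_le_mul_of_nonneg_left hdev (mul_nonneg hcg humax),
      mul_le_mul_of_nonneg_left hdev hcα,
      mul_le_mul_of_nonneg_left hdev hcγ]
  calc _ ≤ _ := htri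
    _ ≤ cf * ‖y - xk‖ + cg * ‖y - xk‖ * umax + cγ * ‖y - xk‖ +
        (ch * ∑ l, φmax l) + cα * ‖y - xk‖ := by
        gcongr <;> first | exact h1 | exact h2 | exact h3 | exact h4 | exact h5
    _ ≤ _ := hfin
end

section
/- Consider the multi-agent sampled-data system with synchronous sampling times t^k = kΓ, Γ > 0, where on [kΓ, (k+1)Γ) each agent i ∈ V evolves as ẋ_i(t) = f_i(x_i(t)) + g_i(x_i(t))u_i^k + φ_i(t) with held input u_i^k, each normal agent's input satisfies u_i^k ∈ U_i(x⃗^k) with ‖u_i^k‖ ≤ u_max, each adversarial agent j ∈ A applies any feasible input u_j^k ∈ U_j(x⃗^k), the trajectory remains in a region where the Lemma-2 bound ‖x⃗(t) − x⃗^k‖ ≤ ε(Γ) and the Lemma-3 Lipschitz constants c_f, c_g, c_α, c_γ, c_h on S are valid, and η(Γ) = (c_f + c_g u_max + c_α + c_γ)ε(Γ) + c_h Σ_{l∈V} φ_l^max. If x⃗^k = x⃗(kΓ) ∈ S and the normal agents' stacked input u⃗^k_N belongs to the safety-preserving set K(x⃗^k) = {u⃗_N ∈ U_N : Σ_{i∈N}[L_{f_i}h^{x_i}(x⃗^k)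 + L_{g_i}h^{x_i}(x⃗^k)u_i] + Σ_{j∈A} γ_j^max(x⃗^k) + α(h(x⃗^k)) + η(Γ) ≤ 0}, then the trajectory satisfies x⃗(t) ∈ S for all t ∈ [kΓ, (k+1)Γ). -/
set_option autoImplicit false

open Set

/-- **Theorem 1 of the paper.** Synchronous sampled-data multi-agent
system: on `[kΓ, (k+1)Γ)` each agent `i` evolves as
`ẋ_i = f_i(x_i) + g_i(x_i) u_i^k + φ_i(t)` with held input `u_i^k`; normal inputs are
feasible with `‖u_i^k‖ ≤ u_max`, adversarial inputs are any feasible inputs; the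
trajectory obeys the Lemma-2 deviation bound `‖x(t) − x^k‖ ≤ ε(Γ)` and the Lemma-3
Lipschitz inequalities along the interval, and
`η(Γ) = (c_f + c_g u_max + c_α + c_γ) ε(Γ) + c_h Σ_l φ_l^max`.
If `x^k = x(kΓ) ∈ S = {h ≤ 0}` and the stacked normal input lies in the
safety-preserving set `K(x^k)`, then `h(x(t)) ≤ 0` (i.e. `x(t) ∈ S`) for all
`t ∈ [kΓ, (k+1)Γ)`. -/
theorem theorem1_sampled_data_safety (N : ℕ) (n m : Fin N → ℕ)
    (Normal Adv : Finset (Fin N))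
    (hpart : Normal ∪ Adv = Finset.univ) (hdisj : Disjoint Normal Adv)
    -- safe set data
    (h : (∀ i, EuclideanSpace ℝ (Fin (n i))) → ℝ)
    (hC1 : ContDiff ℝ 1 h) (hC11 : LocallyLipschitz (fderiv ℝ h))
    (hScompact : IsCompact {x : ∀ i, EuclideanSpace ℝ (Fin (n i)) | h x ≤ 0})
    (α : ℝ → ℝ) (hα_lip : LocallyLipschitz α) (hα_mono : StrictMono α) (hα0 : α 0 = 0)
    -- dynamics data
    (f : ∀ i, EuclideanSpace ℝ (Fin (n i)) → EuclideanSpace ℝ (Fin (n i)))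
    (g : ∀ i, EuclideanSpace ℝ (Fin (n i)) →
      (EuclideanSpace ℝ (Fin (m i)) →L[ℝ] EuclideanSpace ℝ (Fin (n i))))
    (hf : ∀ i, LocallyLipschitz (f i)) (hg : ∀ i, LocallyLipschitz (g i))
    (φ : ∀ i : Fin N, ℝ → EuclideanSpace ℝ (Fin (n i))) (φmax : Fin N → ℝ)
    (hφ : ∀ i, ∀ t : ℝ, 0 ≤ t → ‖φ i t‖ ≤ φmax i)
    -- feasible input sets (compact nonempty, e.g. the polytopes `U_i(x)`)
    (U : ∀ i : Fin N, (∀ j, EuclideanSpace ℝ (Fin (n j))) →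
      Set (EuclideanSpace ℝ (Fin (m i))))
    (hUcomp : ∀ i x, IsCompact (U i x)) (hUne : ∀ i x, (U i x).Nonempty)
    -- sampling data and held inputs
    (k : ℕ) (Γ : ℝ) (hΓ : 0 < Γ)
    (x : ℝ → ∀ i, EuclideanSpace ℝ (Fin (n i)))
    (u : ∀ i, EuclideanSpace ℝ (Fin (m i)))
    (hdyn : ∀ t ∈ Ico ((k : ℝ) * Γ) ((k + 1 : ℝ) * Γ),
      HasDerivAt x (fun i => f i (x t i) + g i (x t i) (u i) + φ i t) t)
    (umax : ℝ) (humax : 0 ≤ umax)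
    (hfeasN : ∀ i ∈ Normal, u i ∈ U i (x ((k : ℝ) * Γ)) ∧ ‖u i‖ ≤ umax)
    (hfeasA : ∀ j ∈ Adv, u j ∈ U j (x ((k : ℝ) * Γ)))
    -- Lemma-2 deviation bound along the interval, with ε(Γ) = (μ/L')(e^{L'Γ}−1)
    (μ L' : ℝ) (hμ : 0 ≤ μ) (hL' : 0 < L')
    (hdev : ∀ t ∈ Ico ((k : ℝ) * Γ) ((k + 1 : ℝ) * Γ),
      ‖x t - x ((k : ℝ) * Γ)‖ ≤ μ / L' * (Real.exp (L' * Γ) - 1))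
    -- Lemma-3 Lipschitz constants, valid along the trajectory over the interval
    (cf cg cα cγ ch : ℝ)
    (hcf : 0 ≤ cf) (hcg : 0 ≤ cg) (hcα : 0 ≤ cα) (hcγ : 0 ≤ cγ) (hch : 0 ≤ ch)
    (hLf : ∀ t ∈ Ico ((k : ℝ) * Γ) ((k + 1 : ℝ) * Γ),
      ∑ i ∈ Normal, ‖fderiv ℝ h (x t) (Pi.single i (f i (x t i))) -
          fderiv ℝ h (x ((k : ℝ) * Γ)) (Pi.single i (f i (x ((k : ℝ) * Γ) i)))‖ ≤
        cf * ‖x t - x ((k : ℝ) * Γ)‖)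
    (hLg : ∀ t ∈ Ico ((k : ℝ) * Γ) ((k + 1 : ℝ) * Γ),
      ∑ i ∈ Normal, ‖fderiv ℝ h (x t) (Pi.single i (g i (x t i) (u i))) -
          fderiv ℝ h (x ((k : ℝ) * Γ)) (Pi.single i (g i (x ((k : ℝ) * Γ) i) (u i)))‖ ≤
        cg * umax * ‖x t - x ((k : ℝ) * Γ)‖)
    (hαlip : ∀ t ∈ Ico ((k : ℝ) * Γ) ((k + 1 : ℝ) * Γ),
      ‖α (h (x t)) - α (h (x ((k : ℝ) * Γ)))‖ ≤ cα * ‖x t - x ((k : ℝ) * Γ)‖)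
    (hγlip : ∀ t ∈ Ico ((k : ℝ) * Γ) ((k + 1 : ℝ) * Γ),
      ∑ j ∈ Adv, ‖sSup ((fun v => fderiv ℝ h (x t) (Pi.single j (f j (x t j))) +
            fderiv ℝ h (x t) (Pi.single j (g j (x t j) v))) '' U j (x t)) -
          sSup ((fun v => fderiv ℝ h (x ((k : ℝ) * Γ)) (Pi.single j (f j (x ((k : ℝ) * Γ) j))) +
            fderiv ℝ h (x ((k : ℝ) * Γ)) (Pi.single j (g j (x ((k : ℝ) * Γ) j) v))) ''
              U j (x ((k : ℝ) * Γ)))‖ ≤ cγ * ‖x t - x ((k : ℝ) * Γ)‖)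
    (hφbound : ∀ t ∈ Ico ((k : ℝ) * Γ) ((k + 1 : ℝ) * Γ),
      ‖∑ l, fderiv ℝ h (x t) (Pi.single l (φ l t))‖ ≤ ch * ∑ l, φmax l)
    -- the adversarial value functions bound every feasible adversarial action
    (hγub : ∀ t ∈ Ico ((k : ℝ) * Γ) ((k + 1 : ℝ) * Γ), ∀ j ∈ Adv,
      fderiv ℝ h (x t) (Pi.single j (f j (x t j))) +
          fderiv ℝ h (x t) (Pi.single j (g j (x t j) (u j))) ≤
        sSup ((fun v => fderiv ℝ h (x t) (Pi.single j (f j (x t j))) +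
            fderiv ℝ h (x t) (Pi.single j (g j (x t j) v))) '' U j (x t)))
    -- sampled state is safe
    (hxk : h (x ((k : ℝ) * Γ)) ≤ 0)
    -- the normal inputs belong to the safety-preserving set K(x^k)
    (hK : (∑ i ∈ Normal, (fderiv ℝ h (x ((k : ℝ) * Γ)) (Pi.single i (f i (x ((k : ℝ) * Γ) i))) +
            fderiv ℝ h (x ((k : ℝ) * Γ)) (Pi.single i (g i (x ((k : ℝ) * Γ) i) (u i))))) +
          (∑ j ∈ Adv, sSup ((fun v =>
            fderiv ℝ h (x ((k : ℝ) * Γ)) (Pi.single j (f j (x ((k : ℝ) * Γ) j))) +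
              fderiv ℝ h (x ((k : ℝ) * Γ)) (Pi.single j (g j (x ((k : ℝ) * Γ) j) v))) ''
                U j (x ((k : ℝ) * Γ)))) +
          α (h (x ((k : ℝ) * Γ))) +
          ((cf + cg * umax + cα + cγ) * (μ / L' * (Real.exp (L' * Γ) - 1)) +
            ch * ∑ l, φmax l) ≤ 0) :
    ∀ t ∈ Ico ((k : ℝ) * Γ) ((k + 1 : ℝ) * Γ), h (x t) ≤ 0 := by
  set t0 : ℝ := (k : ℝ) * Γ with ht0
  set T : ℝ := ((k : ℝ) + 1) * Γ with hT
  set ε : ℝ := μ / L' * (Real.exp (L' * Γ) - 1) with hε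
  set y : ℝ → ℝ := fun s => h (x s) with hy
  set v : ℝ → ∀ i, EuclideanSpace ℝ (Fin (n i)) :=
    fun t i => f i (x t i) + g i (x t i) (u i) + φ i t with hv
  have habr : ∀ a b : ℝ, a - b ≤ ‖a - b‖ := fun a b =>
    (le_abs_self _).trans_eq (Real.norm_eq_abs _).symm
  have hyd : ∀ t ∈ Ico t0 T, HasDerivAt y (fderiv ℝ h (x t) (v t)) t := by
    intro t htI
    exact ((hC1.differentiable one_ne_zero).differentiableAt.hasFDerivAt).comp_hasDerivAt t (hdyn t htI)
  have hsplit : ∀ t : ℝ, fderiv ℝ h (x t) (v t) =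
      (∑ i ∈ Normal, (fderiv ℝ h (x t) (Pi.single i (f i (x t i))) +
          fderiv ℝ h (x t) (Pi.single i (g i (x t i) (u i))))) +
      (∑ j ∈ Adv, (fderiv ℝ h (x t) (Pi.single j (f j (x t j))) +
          fderiv ℝ h (x t) (Pi.single j (g j (x t j) (u j))))) +
      ∑ l, fderiv ℝ h (x t) (Pi.single l (φ l t)) := by
    intro t
    have e1 : v t = ∑ l, Pi.single l (f l (x t l) + g l (x t l) (u l) + φ l t) :=
      (Finset.univ_sum_single (v t)).symm
    rw [e1, map_sum]
    have e2 : ∀ l : Fin N, fderiv ℝ h (x t)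
        (Pi.single l (f l (x t l) + g l (x t l) (u l) + φ l t)) =
        (fderiv ℝ h (x t) (Pi.single l (f l (x t l))) +
          fderiv ℝ h (x t) (Pi.single l (g l (x t l) (u l)))) +
        fderiv ℝ h (x t) (Pi.single l (φ l t)) := by
      intro l
      rw [Pi.single_add, Pi.single_add, map_add, map_add]
    rw [Finset.sum_congr rfl (fun l _ => e2 l), Finset.sum_add_distrib]
    congr 1
    rw [← hpart, Finset.sum_union hdisj]
  have key : ∀ t ∈ Ico t0 T, fderiv ℝ h (x t) (v t) ≤ -α (y t) := by
    intro t htI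
    have hΔ : ‖x t - x t0‖ ≤ ε := hdev t htI
    set Δ : ℝ := ‖x t - x t0‖ with hΔdef
    have hΔ0 : (0:ℝ) ≤ Δ := norm_nonneg _
    have hNf : ∑ i ∈ Normal, (fderiv ℝ h (x t) (Pi.single i (f i (x t i))) -
        fderiv ℝ h (x t0) (Pi.single i (f i (x t0 i)))) ≤ cf * Δ :=
      le_trans (Finset.sum_le_sum fun i _ => habr _ _) (hLf t htI)
    have hNg : ∑ i ∈ Normal, (fderiv ℝ h (x t) (Pi.single i (g i (x t i) (u i))) -
        fderiv ℝ h (x t0) (Pi.single i (g i (x t0 i) (u i)))) ≤ cg * umax * Δ :=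
      le_trans (Finset.sum_le_sum fun i _ => habr _ _) (hLg t htI)
    have hA1 : ∑ j ∈ Adv, (fderiv ℝ h (x t) (Pi.single j (f j (x t j))) +
        fderiv ℝ h (x t) (Pi.single j (g j (x t j) (u j)))) ≤
        ∑ j ∈ Adv, sSup ((fun w => fderiv ℝ h (x t) (Pi.single j (f j (x t j))) +
            fderiv ℝ h (x t) (Pi.single j (g j (x t j) w))) '' U j (x t)) :=
      Finset.sum_le_sum fun j hj => hγub t htI j hj
    have hA2 : ∑ j ∈ Adv, (sSup ((fun w => fderiv ℝ h (x t) (Pi.single j (f j (x t j))) +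
            fderiv ℝ h (x t) (Pi.single j (g j (x t j) w))) '' U j (x t)) -
        sSup ((fun w => fderiv ℝ h (x t0) (Pi.single j (f j (x t0 j))) +
            fderiv ℝ h (x t0) (Pi.single j (g j (x t0 j) w))) '' U j (x t0))) ≤ cγ * Δ :=
      le_trans (Finset.sum_le_sum fun j _ => habr _ _) (hγlip t htI)
    have hP : ∑ l, fderiv ℝ h (x t) (Pi.single l (φ l t)) ≤ ch * ∑ l, φmax l :=
      le_trans ((le_abs_self _).trans_eq (Real.norm_eq_abs _).symm) (hφbound t htI)
    have hαb : α (h (x t)) - α (h (x t0)) ≤ cα * Δ :=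
      le_trans (habr _ _) (hαlip t htI)
    have m1 : cf * Δ ≤ cf * ε := mul_le_mul_of_nonneg_left hΔ hcf
    have m2 : cg * umax * Δ ≤ cg * umax * ε :=
      mul_le_mul_of_nonneg_left hΔ (mul_nonneg hcg humax)
    have m3 : cγ * Δ ≤ cγ * ε := mul_le_mul_of_nonneg_left hΔ hcγ
    have m4 : cα * Δ ≤ cα * ε := mul_le_mul_of_nonneg_left hΔ hcα
    have hdist : (cf + cg * umax + cα + cγ) * ε =
        cf * ε + cg * umax * ε + cα * ε + cγ * ε := by ring
    have hsum_sub1 := Finset.sum_sub_distrib (s := Normal)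
      (f := fun i => fderiv ℝ h (x t) (Pi.single i (f i (x t i))))
      (g := fun i => fderiv ℝ h (x t0) (Pi.single i (f i (x t0 i))))
    have hsum_sub2 := Finset.sum_sub_distrib (s := Normal)
      (f := fun i => fderiv ℝ h (x t) (Pi.single i (g i (x t i) (u i))))
      (g := fun i => fderiv ℝ h (x t0) (Pi.single i (g i (x t0 i) (u i))))
    have hsum_sub3 := Finset.sum_sub_distrib (s := Adv)
      (f := fun j => sSup ((fun w => fderiv ℝ h (x t) (Pi.single j (f j (x t j))) +
            fderiv ℝ h (x t) (Pi.single j (g j (x t j) w))) '' U j (x t)))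
      (g := fun j => sSup ((fun w => fderiv ℝ h (x t0) (Pi.single j (f j (x t0 j))) +
            fderiv ℝ h (x t0) (Pi.single j (g j (x t0 j) w))) '' U j (x t0)))
    have hNadd1 := Finset.sum_add_distrib (s := Normal)
      (f := fun i => fderiv ℝ h (x t) (Pi.single i (f i (x t i))))
      (g := fun i => fderiv ℝ h (x t) (Pi.single i (g i (x t i) (u i))))
    have hNadd0 := Finset.sum_add_distrib (s := Normal)
      (f := fun i => fderiv ℝ h (x t0) (Pi.single i (f i (x t0 i))))
      (g := fun i => fderiv ℝ h (x t0) (Pi.single i (g i (x t0 i) (u i))))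
    rw [hsum_sub1] at hNf
    rw [hsum_sub2] at hNg
    rw [hsum_sub3] at hA2
    rw [hNadd0] at hK
    rw [hsplit t]
    simp only [hy]
    rw [hNadd1]
    set S1 := ∑ i ∈ Normal, fderiv ℝ h (x t) (Pi.single i (f i (x t i))) with hS1
    set S2 := ∑ i ∈ Normal, fderiv ℝ h (x t) (Pi.single i (g i (x t i) (u i))) with hS2
    set S3 := ∑ i ∈ Normal, fderiv ℝ h (x t0) (Pi.single i (f i (x t0 i))) with hS3
    set S4 := ∑ i ∈ Normal, fderiv ℝ h (x t0) (Pi.single i (g i (x t0 i) (u i))) with hS4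
    set S5 := ∑ j ∈ Adv, (fderiv ℝ h (x t) (Pi.single j (f j (x t j))) +
        fderiv ℝ h (x t) (Pi.single j (g j (x t j) (u j)))) with hS5
    set S6 := ∑ j ∈ Adv, sSup ((fun w => fderiv ℝ h (x t) (Pi.single j (f j (x t j))) +
        fderiv ℝ h (x t) (Pi.single j (g j (x t j) w))) '' U j (x t)) with hS6
    set S7 := ∑ j ∈ Adv, sSup ((fun w => fderiv ℝ h (x t0) (Pi.single j (f j (x t0 j))) +
        fderiv ℝ h (x t0) (Pi.single j (g j (x t0 j) w))) '' U j (x t0)) with hS7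
    set S8 := ∑ l, fderiv ℝ h (x t) (Pi.single l (φ l t)) with hS8
    set a1 := α (h (x t0)) with ha1
    set a2 := α (h (x t)) with ha2
    set P := ∑ l, φmax l with hP2
    set E1 := (cf + cg * umax + cα + cγ) * ε with hE1
    linarith [hK, hNf, hNg, hA1, hA2, hP, hαb, m1, m2, m3, m4, hdist]
  intro t htI
  by_contra hpos
  push_neg at hpos
  have hyt : (0:ℝ) < y t := hpos
  obtain ⟨ht0t, htT⟩ := htI
  have hIsub : Icc t0 t ⊆ Ico t0 T := fun s hs => ⟨hs.1, lt_of_le_of_lt hs.2 htT⟩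
  have hycont : ContinuousOn y (Icc t0 t) := fun s hs =>
    ((hyd s (hIsub hs)).continuousAt).continuousWithinAt
  have hyt0 : y t0 ≤ 0 := hxk
  set Sset : Set ℝ := {s ∈ Icc t0 t | y s ≤ 0} with hSset
  have hSne : Sset.Nonempty := ⟨t0, ⟨le_refl _, ht0t⟩, hyt0⟩
  have hSsub : Sset ⊆ Icc t0 t := fun s hs => hs.1
  have hSbdd : BddAbove Sset := (isCompact_Icc.bddAbove).mono hSsub
  have hSclosed : IsClosed Sset := by
    have heq : Sset = Icc t0 t ∩ y ⁻¹' Iic 0 := by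
      ext s; simp [hSset, Set.mem_setOf_eq]
    rw [heq]
    exact hycont.preimage_isClosed_of_isClosed isClosed_Icc isClosed_Iic
  set s0 : ℝ := sSup Sset with hs0
  have hs0mem : s0 ∈ Sset := hSclosed.csSup_mem hSne hSbdd
  have hs0Icc : s0 ∈ Icc t0 t := hSsub hs0mem
  have hys0 : y s0 ≤ 0 := hs0mem.2
  have hs0t : s0 < t := lt_of_le_of_ne hs0Icc.2 (by
    intro hcontra
    rw [hcontra] at hys0
    linarith)
  have hant : AntitoneOn y (Icc s0 t) := by
    apply antitoneOn_of_deriv_nonpos (convex_Icc s0 t)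
    · exact hycont.mono (fun s hs => ⟨le_trans hs0Icc.1 hs.1, hs.2⟩)
    · rw [interior_Icc]
      intro s hs
      have hsI : s ∈ Ico t0 T :=
        ⟨le_trans hs0Icc.1 (le_of_lt hs.1), lt_trans hs.2 htT⟩
      exact ((hyd s hsI).differentiableAt).differentiableWithinAt
    · rw [interior_Icc]
      intro s hs
      have hsI : s ∈ Ico t0 T :=
        ⟨le_trans hs0Icc.1 (le_of_lt hs.1), lt_trans hs.2 htT⟩
      rw [(hyd s hsI).deriv]
      have hys : 0 < y s := by
        by_contra hys
        push_neg at hys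
        have hmem : s ∈ Sset := ⟨⟨le_trans hs0Icc.1 (le_of_lt hs.1), le_of_lt hs.2⟩, hys⟩
        exact absurd (le_csSup hSbdd hmem) (not_le.mpr hs.1)
      have hαpos : α 0 < α (y s) := hα_mono hys
      have hk := key s hsI
      linarith [hα0 ▸ hαpos]
  have hfin : y t ≤ y s0 :=
    hant ⟨le_refl s0, le_of_lt hs0t⟩ ⟨le_of_lt hs0t, le_refl t⟩ (le_of_lt hs0t)
  linarith
end

section
/- Consider the multi-agent sampled-data system where each agent i has asynchronous sampling times satisfying t_i^{k+1} − t_i^k = Γ_i + δ_i(k) with ‖δ_i(k)‖ ≤ δ_i^max ≤ δ^max, and on [t_i^k, t_i^{k+1}) agent i applies the held input u_i^{k_i}; each normal agent i stores the most recently received inputs û_l^{k_i} of the other normal agents l. Suppose the trajectory remains in a region where the Lemma-2 bound ‖x⃗(t) − x⃗^{k_i}‖ ≤ ε(Γ_i + δ^max) and the Lemma-3 Lipschitz constants on S are valid, ‖u_l‖ ≤ u_max for all normal inputs, and η(·) is defined by η(Γ) = (c_f + c_g u_max + c_α + c_γ)ε(Γ) + c_h Σ_{l∈V} φ_l^max.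 If at sampling time t_i^k the state satisfies x⃗^{k_i} = x⃗(t_i^k) ∈ S and agent i's input satisfies u_i^{k_i} ∈ K_i(x⃗^{k_i}) = {u_i ∈ U_i : L_{f_i}h^{x_i}(x⃗^{k_i}) + L_{g_i}h^{x_i}(x⃗^{k_i})u_i + Σ_{l∈N\{i}}[L_{f_l}h^{x_l}(x⃗^{k_i}) + L_{g_l}h^{x_l}(x⃗^{k_i})û_l^{k_i}] + Σ_{j∈A} γ_j^max(x⃗^{k_i}) + α(h(x⃗^{k_i})) + η(Γ_i + δ^max) ≤ 0}, where the û_l^{k_i} are the inputs actually being applied by the other normal agents on this interval, then x⃗(t) ∈ S for all t ∈ [t_i^k, t_i^{k+1}). -/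
set_option autoImplicit false

open Set

/-- Comparison lemma: if `y' ≤ -α (y)` on `[a,b)` with `α` strictly monotone,
`α 0 = 0`, and `y a ≤ 0`, then `y ≤ 0` on `[a,b)`. -/
lemma comparison_le_zero (a b : ℝ) (α : ℝ → ℝ) (hmono : StrictMono α) (hα0 : α 0 = 0)
    (y : ℝ → ℝ) (hy : ∀ t ∈ Ico a b, ∃ d, HasDerivAt y d t ∧ d ≤ -α (y t))
    (h0 : y a ≤ 0) : ∀ t ∈ Ico a b, y t ≤ 0 := by
  intro t0 ht0
  by_contra hpos
  push_neg at hpos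
  have hab : a ≤ t0 := ht0.1
  have hsub : Icc a t0 ⊆ Ico a b := fun s hs => ⟨hs.1, lt_of_le_of_lt hs.2 ht0.2⟩
  set T : Set ℝ := {t ∈ Icc a t0 | y t ≤ 0} with hT
  have hTne : T.Nonempty := ⟨a, ⟨le_refl a, hab⟩, h0⟩
  have hTbdd : BddAbove T := ⟨t0, fun s hs => hs.1.2⟩
  set s := sSup T with hs
  have hsmem : s ∈ Icc a t0 := ⟨le_csSup hTbdd ⟨⟨le_refl a, hab⟩, h0⟩,
    csSup_le hTne fun u hu => hu.1.2⟩
  have hcont : ∀ u ∈ Icc a t0, ContinuousAt y u := by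
    intro u hu
    obtain ⟨d, hd, -⟩ := hy u (hsub hu)
    exact hd.continuousAt
  have hys : y s ≤ 0 := by
    by_contra hys
    push_neg at hys
    have := (hcont s hsmem).eventually (eventually_gt_nhds hys)
    obtain ⟨δ, hδpos, hδ⟩ := Metric.eventually_nhds_iff.1 this
    obtain ⟨u, huT, hus⟩ := exists_lt_of_lt_csSup hTne (show s - δ < s by linarith)
    have hule : u ≤ s := le_csSup hTbdd huT
    have : y u > 0 := hδ (by rw [Real.dist_eq]; rw [abs_lt]; constructor <;> linarith)
    exact absurd huT.2 (by linarith)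
  have hst0 : s < t0 := lt_of_le_of_ne hsmem.2 (fun he => by rw [he] at hys; linarith)
  have hypos : ∀ u ∈ Ioc s t0, 0 < y u := by
    intro u hu
    by_contra hyu
    push_neg at hyu
    have : u ≤ s := le_csSup hTbdd ⟨⟨hsmem.1.trans hu.1.le, hu.2⟩, hyu⟩
    exact absurd hu.1 (not_lt.2 this)
  have hanti : StrictAntiOn y (Icc s t0) := by
    apply strictAntiOn_of_deriv_neg (convex_Icc s t0)
    · intro u hu
      exact (hcont u ⟨hsmem.1.trans hu.1, hu.2⟩).continuousWithinAt
    · intro u hu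
      rw [interior_Icc] at hu
      obtain ⟨d, hd, hdle⟩ := hy u (hsub ⟨hsmem.1.trans hu.1.le, hu.2.le⟩)
      rw [hd.deriv]
      have : 0 < α (y u) := by
        rw [← hα0]; exact hmono (hypos u ⟨hu.1, hu.2.le⟩)
      linarith
  have := hanti ⟨le_refl s, hst0.le⟩ ⟨hst0.le, le_refl t0⟩ hst0
  linarith


/-- **Theorem 2 of the paper.** Asynchronous sampled-data multi-agent
system: agent `i` samples at `t_i^k` with `t_i^{k+1} − t_i^k = Γ_i + δ_i(k)`,
`‖δ_i(k)‖ ≤ δ^max`; on `[t_i^k, t_i^{k+1})` every agent `l` applies a held input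
`û_l` (for normal agents, the most recently broadcast inputs; for the sampling agent
`i`, its own new input `u_i^{k_i} = û_i`).  Under the Lemma-2 deviation bound with
`ε(Γ_i + δ^max)` and the Lemma-3 Lipschitz constants along the interval, if the
sampled state `x^{k_i} = x(t_i^k)` is in `S = {h ≤ 0}` and `û_i ∈ K_i(x^{k_i})`
(the distributed safety-preserving set with margin `η(Γ_i + δ^max)`), then
`h(x(t)) ≤ 0` for all `t ∈ [t_i^k, t_i^{k+1})`. -/
theorem theorem2_asynchronous_safety (N : ℕ) (n m : Fin N → ℕ)
    (Normal Adv : Finset (Fin N))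
    (hpart : Normal ∪ Adv = Finset.univ) (hdisj : Disjoint Normal Adv)
    (i : Fin N) (hiN : i ∈ Normal)
    -- safe set data
    (h : (∀ l, EuclideanSpace ℝ (Fin (n l))) → ℝ)
    (hC1 : ContDiff ℝ 1 h) (hC11 : LocallyLipschitz (fderiv ℝ h))
    (hScompact : IsCompact {x : ∀ l, EuclideanSpace ℝ (Fin (n l)) | h x ≤ 0})
    (α : ℝ → ℝ) (hα_lip : LocallyLipschitz α) (hα_mono : StrictMono α) (hα0 : α 0 = 0)
    -- dynamics data
    (f : ∀ l, EuclideanSpace ℝ (Fin (n l)) → EuclideanSpace ℝ (Fin (n l)))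
    (g : ∀ l, EuclideanSpace ℝ (Fin (n l)) →
      (EuclideanSpace ℝ (Fin (m l)) →L[ℝ] EuclideanSpace ℝ (Fin (n l))))
    (hf : ∀ l, LocallyLipschitz (f l)) (hg : ∀ l, LocallyLipschitz (g l))
    (φ : ∀ l : Fin N, ℝ → EuclideanSpace ℝ (Fin (n l))) (φmax : Fin N → ℝ)
    (hφ : ∀ l, ∀ t : ℝ, 0 ≤ t → ‖φ l t‖ ≤ φmax l)
    -- feasible input sets
    (U : ∀ l : Fin N, (∀ j, EuclideanSpace ℝ (Fin (n j))) →
      Set (EuclideanSpace ℝ (Fin (m l))))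
    (hUcomp : ∀ l x, IsCompact (U l x)) (hUne : ∀ l x, (U l x).Nonempty)
    -- agent i's sampling interval [tk, tk1) with tk1 − tk = Γ_i + δ, ‖δ‖ ≤ δ^max
    (tk tk1 Γi δ δmax : ℝ) (hΓi : 0 < Γi) (hδ : ‖δ‖ ≤ δmax) (hδmax : 0 ≤ δmax)
    (hstep : tk1 = tk + Γi + δ) (htk : 0 ≤ tk) (hlt : tk < tk1)
    (x : ℝ → ∀ l, EuclideanSpace ℝ (Fin (n l)))
    (uhat : ∀ l, EuclideanSpace ℝ (Fin (m l)))
    (hdyn : ∀ t ∈ Ico tk tk1,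
      HasDerivAt x (fun l => f l (x t l) + g l (x t l) (uhat l) + φ l t) t)
    (umax : ℝ) (humax : 0 ≤ umax)
    (hfeasN : ∀ l ∈ Normal, ‖uhat l‖ ≤ umax)
    (hfeasi : uhat i ∈ U i (x tk))
    (hfeasA : ∀ j ∈ Adv, uhat j ∈ U j (x tk))
    -- Lemma-2 deviation bound with ε(Γ_i + δ^max)
    (μ L' : ℝ) (hμ : 0 ≤ μ) (hL' : 0 < L')
    (hdev : ∀ t ∈ Ico tk tk1,
      ‖x t - x tk‖ ≤ μ / L' * (Real.exp (L' * (Γi + δmax)) - 1))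
    -- Lemma-3 Lipschitz constants valid along the interval
    (cf cg cα cγ ch : ℝ)
    (hcf : 0 ≤ cf) (hcg : 0 ≤ cg) (hcα : 0 ≤ cα) (hcγ : 0 ≤ cγ) (hch : 0 ≤ ch)
    (hLf : ∀ t ∈ Ico tk tk1,
      ∑ l ∈ Normal, ‖fderiv ℝ h (x t) (Pi.single l (f l (x t l))) -
          fderiv ℝ h (x tk) (Pi.single l (f l (x tk l)))‖ ≤ cf * ‖x t - x tk‖)
    (hLg : ∀ t ∈ Ico tk tk1,
      ∑ l ∈ Normal, ‖fderiv ℝ h (x t) (Pi.single l (g l (x t l) (uhat l))) -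
          fderiv ℝ h (x tk) (Pi.single l (g l (x tk l) (uhat l)))‖ ≤
        cg * umax * ‖x t - x tk‖)
    (hαlip : ∀ t ∈ Ico tk tk1,
      ‖α (h (x t)) - α (h (x tk))‖ ≤ cα * ‖x t - x tk‖)
    (hγlip : ∀ t ∈ Ico tk tk1,
      ∑ j ∈ Adv, ‖sSup ((fun v => fderiv ℝ h (x t) (Pi.single j (f j (x t j))) +
            fderiv ℝ h (x t) (Pi.single j (g j (x t j) v))) '' U j (x t)) -
          sSup ((fun v => fderiv ℝ h (x tk) (Pi.single j (f j (x tk j))) +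
            fderiv ℝ h (x tk) (Pi.single j (g j (x tk j) v))) '' U j (x tk))‖ ≤
        cγ * ‖x t - x tk‖)
    (hφbound : ∀ t ∈ Ico tk tk1,
      ‖∑ l, fderiv ℝ h (x t) (Pi.single l (φ l t))‖ ≤ ch * ∑ l, φmax l)
    -- adversarial actions are dominated by the value functions along the interval
    (hγub : ∀ t ∈ Ico tk tk1, ∀ j ∈ Adv,
      fderiv ℝ h (x t) (Pi.single j (f j (x t j))) +
          fderiv ℝ h (x t) (Pi.single j (g j (x t j) (uhat j))) ≤
        sSup ((fun v => fderiv ℝ h (x t) (Pi.single j (f j (x t j))) +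
            fderiv ℝ h (x t) (Pi.single j (g j (x t j) v))) '' U j (x t)))
    -- sampled state is safe
    (hxk : h (x tk) ≤ 0)
    -- u_i^{k_i} ∈ K_i(x^{k_i}): the distributed safety-preserving condition
    (hK : (fderiv ℝ h (x tk) (Pi.single i (f i (x tk i))) +
            fderiv ℝ h (x tk) (Pi.single i (g i (x tk i) (uhat i)))) +
          (∑ l ∈ Normal.erase i,
            (fderiv ℝ h (x tk) (Pi.single l (f l (x tk l))) +
              fderiv ℝ h (x tk) (Pi.single l (g l (x tk l) (uhat l))))) +
          (∑ j ∈ Adv, sSup ((fun v => fderiv ℝ h (x tk) (Pi.single j (f j (x tk j))) +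
            fderiv ℝ h (x tk) (Pi.single j (g j (x tk j) v))) '' U j (x tk))) +
          α (h (x tk)) +
          ((cf + cg * umax + cα + cγ) * (μ / L' * (Real.exp (L' * (Γi + δmax)) - 1)) +
            ch * ∑ l, φmax l) ≤ 0) :
    ∀ t ∈ Ico tk tk1, h (x t) ≤ 0 := by
  classical
  set ε := μ / L' * (Real.exp (L' * (Γi + δmax)) - 1) with hεdef
  have hεnn : 0 ≤ ε := by
    apply mul_nonneg (div_nonneg hμ hL'.le)
    have h1 : (1:ℝ) ≤ Real.exp (L' * (Γi + δmax)) :=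
      Real.one_le_exp (by positivity)
    linarith
  set A : Fin N → ℝ → ℝ :=
    fun l t => fderiv ℝ h (x t) (Pi.single l (f l (x t l))) with hA
  set B : Fin N → ℝ → ℝ :=
    fun l t => fderiv ℝ h (x t) (Pi.single l (g l (x t l) (uhat l))) with hB
  set C : Fin N → ℝ → ℝ :=
    fun l t => fderiv ℝ h (x t) (Pi.single l (φ l t)) with hC
  set G : Fin N → ℝ → ℝ :=
    fun j t => sSup ((fun v => fderiv ℝ h (x t) (Pi.single j (f j (x t j))) +
      fderiv ℝ h (x t) (Pi.single j (g j (x t j) v))) '' U j (x t)) with hG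
  have hLf' : ∀ t ∈ Ico tk tk1,
      ∑ l ∈ Normal, ‖A l t - A l tk‖ ≤ cf * ‖x t - x tk‖ := hLf
  have hLg' : ∀ t ∈ Ico tk tk1,
      ∑ l ∈ Normal, ‖B l t - B l tk‖ ≤ cg * umax * ‖x t - x tk‖ := hLg
  have hγlip' : ∀ t ∈ Ico tk tk1,
      ∑ j ∈ Adv, ‖G j t - G j tk‖ ≤ cγ * ‖x t - x tk‖ := hγlip
  have hγub' : ∀ t ∈ Ico tk tk1, ∀ j ∈ Adv, A j t + B j t ≤ G j t := hγub
  have hφ' : ∀ t ∈ Ico tk tk1, ‖∑ l, C l t‖ ≤ ch * ∑ l, φmax l := hφbound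
  have hK' : (A i tk + B i tk) + (∑ l ∈ Normal.erase i, (A l tk + B l tk)) +
      (∑ j ∈ Adv, G j tk) + α (h (x tk)) +
      ((cf + cg * umax + cα + cγ) * ε + ch * ∑ l, φmax l) ≤ 0 := hK
  -- derivative of h ∘ x
  have hkey : ∀ t ∈ Ico tk tk1,
      HasDerivAt (fun s => h (x s)) (∑ l, (A l t + B l t + C l t)) t := by
    intro t ht
    have hh : HasFDerivAt h (fderiv ℝ h (x t)) (x t) :=
      (hC1.differentiable one_ne_zero (x t)).hasFDerivAt
    have hcomp := hh.comp_hasDerivAt t (hdyn t ht)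
    refine hcomp.congr_deriv (Eq.symm ?_)
    have hv := Finset.univ_sum_single
      (fun l => f l (x t l) + g l (x t l) (uhat l) + φ l t)
    conv_rhs => rw [← hv]
    rw [map_sum]
    refine Finset.sum_congr rfl fun l _ => ?_
    simp only [hA, hB, hC, Pi.single_add, map_add]
  -- derivative bound
  have hbound : ∀ t ∈ Ico tk tk1,
      ∑ l, (A l t + B l t + C l t) ≤ -α (h (x t)) := by
    intro t ht
    have hdevt : ‖x t - x tk‖ ≤ ε := hdev t ht
    have hNf : ∑ l ∈ Normal, A l t ≤ ∑ l ∈ Normal, A l tk + cf * ε := by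
      have h1 : ∑ l ∈ Normal, A l t - ∑ l ∈ Normal, A l tk ≤
          ∑ l ∈ Normal, ‖A l t - A l tk‖ := by
        rw [← Finset.sum_sub_distrib]
        exact Finset.sum_le_sum fun l _ => (le_abs_self _).trans
          (by rw [Real.norm_eq_abs])
      have h3 : cf * ‖x t - x tk‖ ≤ cf * ε := mul_le_mul_of_nonneg_left hdevt hcf
      linarith [hLf' t ht]
    have hNg : ∑ l ∈ Normal, B l t ≤ ∑ l ∈ Normal, B l tk + cg * umax * ε := by
      have h1 : ∑ l ∈ Normal, B l t - ∑ l ∈ Normal, B l tk ≤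
          ∑ l ∈ Normal, ‖B l t - B l tk‖ := by
        rw [← Finset.sum_sub_distrib]
        exact Finset.sum_le_sum fun l _ => (le_abs_self _).trans
          (by rw [Real.norm_eq_abs])
      have h3 : cg * umax * ‖x t - x tk‖ ≤ cg * umax * ε :=
        mul_le_mul_of_nonneg_left hdevt (mul_nonneg hcg humax)
      linarith [hLg' t ht]
    have hAdv : ∑ j ∈ Adv, (A j t + B j t) ≤ ∑ j ∈ Adv, G j tk + cγ * ε := by
      have ha : ∑ j ∈ Adv, (A j t + B j t) ≤ ∑ j ∈ Adv, G j t :=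
        Finset.sum_le_sum fun j hj => hγub' t ht j hj
      have h1 : ∑ j ∈ Adv, G j t - ∑ j ∈ Adv, G j tk ≤
          ∑ j ∈ Adv, ‖G j t - G j tk‖ := by
        rw [← Finset.sum_sub_distrib]
        exact Finset.sum_le_sum fun j _ => (le_abs_self _).trans
          (by rw [Real.norm_eq_abs])
      have h3 : cγ * ‖x t - x tk‖ ≤ cγ * ε := mul_le_mul_of_nonneg_left hdevt hcγ
      linarith [hγlip' t ht]
    have hCb : ∑ l, C l t ≤ ch * ∑ l, φmax l :=
      (le_abs_self _).trans (by rw [← Real.norm_eq_abs]; exact hφ' t ht)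
    have hαt : α (h (x t)) ≤ α (h (x tk)) + cα * ε := by
      have h1 := hαlip t ht
      have h2 : α (h (x t)) - α (h (x tk)) ≤ ‖α (h (x t)) - α (h (x tk))‖ :=
        (le_abs_self _).trans (by rw [Real.norm_eq_abs])
      have h3 : cα * ‖x t - x tk‖ ≤ cα * ε := mul_le_mul_of_nonneg_left hdevt hcα
      linarith
    have hsplit : ∑ l, (A l t + B l t + C l t) =
        (∑ l ∈ Normal, (A l t + B l t) + ∑ j ∈ Adv, (A j t + B j t)) +
          ∑ l, C l t := by
      rw [Finset.sum_add_distrib]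
      congr 1
      rw [← hpart, Finset.sum_union hdisj]
    have hNsum : ∑ l ∈ Normal, (A l t + B l t) =
        ∑ l ∈ Normal, A l t + ∑ l ∈ Normal, B l t := Finset.sum_add_distrib
    have hNsumk : ∑ l ∈ Normal, A l tk + ∑ l ∈ Normal, B l tk =
        ∑ l ∈ Normal, (A l tk + B l tk) := Finset.sum_add_distrib.symm
    have hKsum : (A i tk + B i tk) + ∑ l ∈ Normal.erase i, (A l tk + B l tk) =
        ∑ l ∈ Normal, (A l tk + B l tk) :=
      Finset.add_sum_erase Normal (fun l => A l tk + B l tk) hiN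
    have hexp : (cf + cg * umax + cα + cγ) * ε =
        cf * ε + cg * umax * ε + cα * ε + cγ * ε := by ring
    rw [hsplit, hNsum]
    linarith
  exact comparison_le_zero tk tk1 α hα_mono hα0 (fun s => h (x s))
    (fun t ht => ⟨_, hkey t ht, hbound t ht⟩) hxk
end

section
/- Let q ≥ 1, let T > t₀, let ψ_0, ψ_1, …, ψ_{q−1} : [t₀, T] → ℝ be differentiable, and let α_1, …, α_q : ℝ → ℝ be locally Lipschitz extended class-K∞ functions. Suppose ψ_j(t) = ψ̇_{j−1}(t) + α_j(ψ_{j−1}(t)) for j = 1, …, q−1, and define ψ_q(t) = ψ̇_{q−1}(t) + α_q(ψ_{q−1}(t)). If ψ_j(t₀) ≤ 0 for all 0 ≤ j ≤ q−1 and ψ_q(t) ≤ 0 for all t ∈ [t₀, T], then ψ_j(t) ≤ 0 for all 0 ≤ j ≤ q−1 and all t ∈ [t₀, T]; in particular ψ_0(t) ≤ 0 on [t₀, T]. -/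
set_option autoImplicit false

open Set

/-- One-step Nagumo comparison: if `f' t + α (f t) ≤ 0` on `[t₀,T]`, `α` strictly
monotone with `α 0 = 0`, and `f t₀ ≤ 0`, then `f ≤ 0` on `[t₀,T]`. -/
lemma nagumo_step (t₀ T : ℝ) (f f' : ℝ → ℝ) (α : ℝ → ℝ)
    (hm : StrictMono α) (h0 : α 0 = 0)
    (hd : ∀ t ∈ Icc t₀ T, HasDerivWithinAt f (f' t) (Icc t₀ T) t)
    (hineq : ∀ t ∈ Icc t₀ T, f' t + α (f t) ≤ 0)
    (hinit : f t₀ ≤ 0) : ∀ t ∈ Icc t₀ T, f t ≤ 0 := by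
  intro t₁ ht₁
  by_contra hpos
  push_neg at hpos
  have ht₀T : t₀ ≤ T := ht₁.1.trans ht₁.2
  have hcont : ContinuousOn f (Icc t₀ T) := fun t ht => (hd t ht).continuousWithinAt
  have ht₀t₁ : t₀ < t₁ := by
    rcases lt_or_eq_of_le ht₁.1 with h | h
    · exact h
    · exact absurd (h ▸ hinit) (not_le.mpr hpos)
  set S : Set ℝ := Icc t₀ t₁ ∩ f ⁻¹' Iic 0 with hS
  have hsub : Icc t₀ t₁ ⊆ Icc t₀ T := Icc_subset_Icc le_rfl ht₁.2
  have hScl : IsClosed S :=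
    (hcont.mono hsub).preimage_isClosed_of_isClosed isClosed_Icc isClosed_Iic
  have hSne : S.Nonempty := ⟨t₀, ⟨le_rfl, ht₀t₁.le⟩, hinit⟩
  have hSbdd : BddAbove S := ⟨t₁, fun x hx => hx.1.2⟩
  set s := sSup S with hs
  have hsS : s ∈ S := hScl.csSup_mem hSne hSbdd
  have hst₁ : s < t₁ := lt_of_le_of_ne hsS.1.2 (by
    intro h; exact absurd (h ▸ hsS.2) (not_le.mpr hpos))
  have hst₀ : t₀ ≤ s := hsS.1.1
  -- f > 0 on (s, t₁]
  have hfpos : ∀ x ∈ Ioc s t₁, 0 < f x := by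
    intro x hx
    by_contra hfx
    push_neg at hfx
    have : x ∈ S := ⟨⟨hst₀.trans hx.1.le, hx.2⟩, hfx⟩
    exact absurd (le_csSup hSbdd this) (not_le.mpr hx.1)
  -- f is antitone on [s, t₁]
  have hanti : AntitoneOn f (Icc s t₁) := by
    have hsubset : Icc s t₁ ⊆ Icc t₀ T := Icc_subset_Icc hst₀ ht₁.2
    have hIoo : interior (Icc s t₁) = Ioo s t₁ := interior_Icc
    have hderivAt : ∀ x ∈ Ioo s t₁, HasDerivAt f (f' x) x := by
      intro x hx
      have hxmem : x ∈ Icc t₀ T := hsubset ⟨hx.1.le, hx.2.le⟩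
      have : Icc t₀ T ∈ nhds x := Icc_mem_nhds (hst₀.trans_lt hx.1) (hx.2.trans_le ht₁.2)
      exact (hd x hxmem).hasDerivAt this
    apply antitoneOn_of_deriv_nonpos (convex_Icc s t₁) (hcont.mono hsubset)
    · rw [hIoo]
      exact fun x hx => (hderivAt x hx).differentiableAt.differentiableWithinAt
    · rw [hIoo]
      intro x hx
      rw [(hderivAt x hx).deriv]
      have hxmem : x ∈ Icc t₀ T := Icc_subset_Icc hst₀ ht₁.2 ⟨hx.1.le, hx.2.le⟩
      have h1 := hineq x hxmem
      have h2 : 0 < α (f x) := h0 ▸ hm (hfpos x ⟨hx.1, hx.2.le⟩)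
      linarith
  have := hanti ⟨le_rfl, hst₁.le⟩ ⟨hst₁.le, le_rfl⟩ hst₁.le
  have h2 : f s ≤ 0 := hsS.2
  linarith

/-- **higher-order Nagumo chain.** -/
theorem hocbf_chain_nonpositive (q : ℕ) (hq : 1 ≤ q) (t₀ T : ℝ) (ht : t₀ < T)
    (ψ : ℕ → ℝ → ℝ) (ψ' : ℕ → ℝ → ℝ) (α : ℕ → ℝ → ℝ)
    (hα_lip : ∀ j, 1 ≤ j → j ≤ q → LocallyLipschitz (α j))
    (hα_mono : ∀ j, 1 ≤ j → j ≤ q → StrictMono (α j))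
    (hα0 : ∀ j, 1 ≤ j → j ≤ q → α j 0 = 0)
    (hderiv : ∀ j < q, ∀ t ∈ Icc t₀ T, HasDerivWithinAt (ψ j) (ψ' j t) (Icc t₀ T) t)
    (hchain : ∀ j < q, ∀ t ∈ Icc t₀ T, ψ (j + 1) t = ψ' j t + α (j + 1) (ψ j t))
    (hinit : ∀ j < q, ψ j t₀ ≤ 0)
    (hfinal : ∀ t ∈ Icc t₀ T, ψ q t ≤ 0) :
    (∀ j < q, ∀ t ∈ Icc t₀ T, ψ j t ≤ 0) ∧ (∀ t ∈ Icc t₀ T, ψ 0 t ≤ 0) := by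
  -- downward induction: for all d, for all j with j + d = q, ψ j ≤ 0 on Icc
  have key : ∀ d : ℕ, ∀ j : ℕ, j + d = q → ∀ t ∈ Icc t₀ T, ψ j t ≤ 0 := by
    intro d
    induction d with
    | zero =>
      intro j hj
      have : j = q := by omega
      subst this
      exact hfinal
    | succ n ih =>
      intro j hj t htmem
      have hjq : j < q := by omega
      have hnext : ∀ t ∈ Icc t₀ T, ψ (j + 1) t ≤ 0 := ih (j + 1) (by omega)
      have hineq : ∀ t ∈ Icc t₀ T, ψ' j t + α (j + 1) (ψ j t) ≤ 0 := by
        intro u hu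
        rw [← hchain j hjq u hu]
        exact hnext u hu
      exact nagumo_step t₀ T (ψ j) (ψ' j) (α (j + 1))
        (hα_mono (j + 1) (by omega) (by omega)) (hα0 (j + 1) (by omega) (by omega))
        (hderiv j hjq) hineq (hinit j hjq) t htmem
  constructor
  · intro j hj t htmem
    exact key (q - j) j (by omega) t htmem
  · intro t htmem
    exact key q 0 (by omega) t htmem
end

section
/- Let S_I be a compact set and let ψ_{q−1}^d ∈ C^{1,1}_loc (continuously differentiable with locally Lipschitz gradient). For agent i, suppose that for all x⃗ ∈ S_I the interior of the polytope U_i(x⃗) = {u : A_i(x⃗)u ≤ b_i(x⃗)} is nonempty and U_i(x⃗) is uniformly compact near x⃗, with A_i, b_i locally Lipschitz. Then the functions γ̂_i^min(x⃗) = min_{u∈U_i(x⃗)}[L_{f_i}(ψ_{q−1}^d)^{x_i}(x⃗) + L_{g_i}(ψ_{q−1}^d)^{x_i}(x⃗)u] and γ̂_i^max(x⃗) = max_{u∈U_i(x⃗)}[L_{f_i}(ψ_{q−1}^d)^{x_i}(x⃗) + L_{g_i}(ψ_{q−1}^d)^{x_i}(x⃗)u] are locally Lipschitz on S_I. -/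
set_option autoImplicit false

open Set

open scoped NNReal

lemma aux_abs_coord_le_norm {p : ℕ} (u : EuclideanSpace ℝ (Fin p)) (k : Fin p) :
    |u k| ≤ ‖u‖ := by
  rw [EuclideanSpace.norm_eq]
  calc |u k| = Real.sqrt (‖u k‖ ^ 2) := by
        rw [Real.sqrt_sq_eq_abs, Real.norm_eq_abs, abs_abs]
    _ ≤ _ := Real.sqrt_le_sqrt (Finset.single_le_sum
        (fun j _ => sq_nonneg (‖u j‖)) (Finset.mem_univ k))

lemma aux_lip_value {X E : Type*} [PseudoMetricSpace X] (F : X → E → ℝ) (Us : X → Set E)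
    (t : Set X) (K : ℝ≥0)
    (hne : ∀ x ∈ t, (Us x).Nonempty)
    (MF : ℝ) (hbd : ∀ x ∈ t, ∀ u ∈ Us x, |F x u| ≤ MF)
    (hF : ∀ x ∈ t, ∀ y ∈ t, ∀ u ∈ Us y, ∃ u' ∈ Us x, |F x u' - F y u| ≤ K * dist x y) :
    LipschitzOnWith K (fun x => sInf (F x '' Us x)) t ∧
    LipschitzOnWith K (fun x => sSup (F x '' Us x)) t := by
  have hbdb : ∀ x ∈ t, BddBelow (F x '' Us x) := fun x hx =>
    ⟨-MF, by rintro _ ⟨u, hu, rfl⟩; linarith [(abs_le.1 (hbd x hx u hu)).1]⟩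
  have hbda : ∀ x ∈ t, BddAbove (F x '' Us x) := fun x hx =>
    ⟨MF, by rintro _ ⟨u, hu, rfl⟩; linarith [(abs_le.1 (hbd x hx u hu)).2]⟩
  have hni : ∀ x ∈ t, (F x '' Us x).Nonempty := fun x hx => (hne x hx).image _
  have hInf : ∀ x ∈ t, ∀ y ∈ t,
      sInf (F x '' Us x) ≤ sInf (F y '' Us y) + K * dist x y := by
    intro x hx y hy
    rw [← sub_le_iff_le_add]
    apply le_csInf (hni y hy)
    rintro _ ⟨u, hu, rfl⟩
    obtain ⟨u', hu', habs⟩ := hF x hx y hy u hu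
    have h1 : sInf (F x '' Us x) ≤ F x u' := csInf_le (hbdb x hx) ⟨u', hu', rfl⟩
    linarith [(abs_le.1 habs).2]
  have hSup : ∀ x ∈ t, ∀ y ∈ t,
      sSup (F y '' Us y) ≤ sSup (F x '' Us x) + K * dist x y := by
    intro x hx y hy
    apply csSup_le (hni y hy)
    rintro _ ⟨u, hu, rfl⟩
    obtain ⟨u', hu', habs⟩ := hF x hx y hy u hu
    have h1 : F x u' ≤ sSup (F x '' Us x) := le_csSup (hbda x hx) ⟨u', hu', rfl⟩
    linarith [(abs_le.1 habs).1]
  constructor <;> apply LipschitzOnWith.of_dist_le_mul <;> intro x hx y hy <;>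
    rw [Real.dist_eq, abs_sub_le_iff] <;> constructor
  · linarith [hInf x hx y hy]
  · have h := hInf y hy x hx; rw [dist_comm] at h; linarith
  · have h := hSup y hy x hx; rw [dist_comm] at h; linarith
  · linarith [hSup x hx y hy]


lemma aux_op_est {X : Type*} [NormedAddCommGroup X] [NormedSpace ℝ X]
    (D D' : X →L[ℝ] ℝ) (v w : X) :
    |D v - D' w| ≤ ‖D - D'‖ * ‖v‖ + ‖D'‖ * ‖v - w‖ := by
  have h : D v - D' w = (D - D') v + D' (v - w) := by
    simp [ContinuousLinearMap.sub_apply, map_sub]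
  rw [h]
  calc |(D - D') v + D' (v - w)| ≤ |(D - D') v| + |D' (v - w)| := abs_add_le _ _
    _ ≤ ‖D - D'‖ * ‖v‖ + ‖D'‖ * ‖v - w‖ := by
        have a1 := (D - D').le_opNorm v
        have a2 := D'.le_opNorm (v - w)
        rw [Real.norm_eq_abs] at a1 a2
        exact add_le_add a1 a2


set_option maxHeartbeats 1000000 in
/-- **Lemma 5 of the paper.** Let `S_I` be compact and
`ψ_{q−1}^d ∈ C^{1,1}_loc`.  If for all `x ∈ S_I` the polytope
`U_i(x) = {u : A_i(x) u ≤ b_i(x)}` (with `A_i, b_i` locally Lipschitz) has nonempty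
interior and is uniformly compact near `x`, then the value functions
`γ̂ᵢ^min(x) = min_{u∈U_i(x)} [L_{f_i}ψ_{q−1}^{x_i}(x) + L_{g_i}ψ_{q−1}^{x_i}(x) u]` and
`γ̂ᵢ^max(x) = max_{u∈U_i(x)} [...]` are locally Lipschitz on `S_I`. -/
theorem psi_LP_value_locally_lipschitz (N : ℕ) (n m : Fin N → ℕ) (i : Fin N) (q : ℕ)
    (SI : Set (∀ j, EuclideanSpace ℝ (Fin (n j)))) (hSI : IsCompact SI)
    (ψ : (∀ j, EuclideanSpace ℝ (Fin (n j))) → ℝ)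
    (hC1 : ContDiff ℝ 1 ψ) (hC11 : LocallyLipschitz (fderiv ℝ ψ))
    (f : EuclideanSpace ℝ (Fin (n i)) → EuclideanSpace ℝ (Fin (n i)))
    (g : EuclideanSpace ℝ (Fin (n i)) →
      (EuclideanSpace ℝ (Fin (m i)) →L[ℝ] EuclideanSpace ℝ (Fin (n i))))
    (hf : LocallyLipschitz f) (hg : LocallyLipschitz g)
    (qc : ℕ)
    (A : (∀ j, EuclideanSpace ℝ (Fin (n j))) → Fin qc → Fin (m i) → ℝ)
    (b : (∀ j, EuclideanSpace ℝ (Fin (n j))) → Fin qc → ℝ)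
    (hA : LocallyLipschitz A) (hb : LocallyLipschitz b)
    (U : (∀ j, EuclideanSpace ℝ (Fin (n j))) → Set (EuclideanSpace ℝ (Fin (m i))))
    (hU : ∀ x, U x = {u : EuclideanSpace ℝ (Fin (m i)) | ∀ r, ∑ k, A x r k * u k ≤ b x r})
    (hint : ∀ x ∈ SI, ∃ u : EuclideanSpace ℝ (Fin (m i)), ∀ r, ∑ k, A x r k * u k < b x r)
    (hcomp : ∀ x ∈ SI, ∃ Nx ∈ nhds x, IsCompact (closure (⋃ x' ∈ Nx, U x'))) :
    LocallyLipschitzOn SI (fun x => sInf ((fun u : EuclideanSpace ℝ (Fin (m i)) =>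
        fderiv ℝ ψ x (Pi.single i (f (x i))) +
          fderiv ℝ ψ x (Pi.single i (g (x i) u))) '' U x)) ∧
      LocallyLipschitzOn SI (fun x => sSup ((fun u : EuclideanSpace ℝ (Fin (m i)) =>
        fderiv ℝ ψ x (Pi.single i (f (x i))) +
          fderiv ℝ ψ x (Pi.single i (g (x i) u))) '' U x)) := by
  classical
  set F : (∀ j, EuclideanSpace ℝ (Fin (n j))) → EuclideanSpace ℝ (Fin (m i)) → ℝ :=
    fun x u => fderiv ℝ ψ x (Pi.single i (f (x i))) +
      fderiv ℝ ψ x (Pi.single i (g (x i) u)) with hF_def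
  suffices H : ∀ x₀ ∈ SI, ∃ K : ℝ≥0, ∃ t ∈ nhdsWithin x₀ SI,
      LipschitzOnWith K (fun x => sInf (F x '' U x)) t ∧
      LipschitzOnWith K (fun x => sSup (F x '' U x)) t by
    exact ⟨fun x hx => (H x hx).imp fun K ⟨t, ht, h1, _⟩ => ⟨t, ht, h1⟩,
           fun x hx => (H x hx).imp fun K ⟨t, ht, _, h2⟩ => ⟨t, ht, h2⟩⟩
  intro x₀ hx₀
  -- data from hypotheses
  obtain ⟨u₀, hu₀⟩ := hint x₀ hx₀
  obtain ⟨Nx, hNx, hNc⟩ := hcomp x₀ hx₀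
  set C : Set (EuclideanSpace ℝ (Fin (m i))) := closure (⋃ x' ∈ Nx, U x') with hC_def
  have hUC : ∀ x' ∈ Nx, U x' ⊆ C := fun x' hx' =>
    (subset_biUnion_of_mem hx').trans subset_closure
  obtain ⟨M, hM⟩ := hNc.isBounded.exists_norm_le
  have hx₀Nx : x₀ ∈ Nx := mem_of_mem_nhds hNx
  have hu₀U : u₀ ∈ U x₀ := by rw [hU]; exact fun r => (hu₀ r).le
  have hu₀M : ‖u₀‖ ≤ M := hM u₀ (hUC x₀ hx₀Nx hu₀U)
  have hM0 : 0 ≤ M := (norm_nonneg u₀).trans hu₀M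
  -- Slater margin
  obtain ⟨ε, hε, hmargin⟩ : ∃ ε > 0, ∀ r, (∑ k, A x₀ r k * u₀ k) + ε ≤ b x₀ r := by
    rcases isEmpty_or_nonempty (Fin qc) with he | hne
    · exact ⟨1, one_pos, fun r => isEmptyElim r⟩
    · refine ⟨Finset.univ.inf' Finset.univ_nonempty
        (fun r => b x₀ r - ∑ k, A x₀ r k * u₀ k), ?_, ?_⟩
      · exact (Finset.lt_inf'_iff _).2 fun r _ => sub_pos.2 (hu₀ r)
      · intro r
        have := Finset.inf'_le (fun r => b x₀ r - ∑ k, A x₀ r k * u₀ k)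
          (Finset.mem_univ r)
        linarith
  -- local Lipschitz data
  obtain ⟨KA, tA, htA, hLA⟩ := hA x₀
  obtain ⟨Kb, tb, htb, hLb⟩ := hb x₀
  obtain ⟨Kψ, tψ, htψ, hLψ⟩ := hC11 x₀
  obtain ⟨Kf, tf, htf, hLf⟩ := hf (x₀ i)
  obtain ⟨Kg, tg, htg, hLg⟩ := hg (x₀ i)
  -- choose the radius δ
  obtain ⟨δ₁, hδ₁, hball₁⟩ := Metric.mem_nhds_iff.1
    (Filter.inter_mem hNx (Filter.inter_mem htA (Filter.inter_mem htb htψ)))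
  obtain ⟨δ₂, hδ₂, hball₂⟩ := Metric.mem_nhds_iff.1 (Filter.inter_mem htf htg)
  set K' : ℝ := Kb + KA * (m i) * M with hK'_def
  have hK'0 : 0 ≤ K' := by positivity
  set δ : ℝ := min (min (δ₁ / 2) (δ₂ / 2)) (ε / (4 * (K' + 1))) with hδ_def
  have hδ0 : 0 < δ := by
    apply lt_min (lt_min (by linarith) (by linarith))
    positivity
  set B : Set (∀ j, EuclideanSpace ℝ (Fin (n j))) := Metric.closedBall x₀ δ with hB_def
  have hBsub : B ⊆ Nx ∩ (tA ∩ (tb ∩ tψ)) := by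
    refine fun x hx => hball₁ ?_
    have h1 : dist x x₀ ≤ δ := hx
    have h2 : δ < δ₁ := lt_of_le_of_lt (min_le_left _ _)
      (lt_of_le_of_lt (min_le_left _ _) (by linarith))
    exact Metric.mem_ball.2 (lt_of_le_of_lt h1 h2)
  have hBNx : ∀ x ∈ B, x ∈ Nx := fun x hx => (hBsub hx).1
  have hBtA : ∀ x ∈ B, x ∈ tA := fun x hx => (hBsub hx).2.1
  have hBtb : ∀ x ∈ B, x ∈ tb := fun x hx => (hBsub hx).2.2.1
  have hBtψ : ∀ x ∈ B, x ∈ tψ := fun x hx => (hBsub hx).2.2.2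
  have hBi : ∀ x ∈ B, x i ∈ tf ∩ tg := by
    intro x hx
    apply hball₂
    have h1 : dist (x i) (x₀ i) ≤ dist x x₀ := dist_le_pi_dist x x₀ i
    have h2 : dist x x₀ ≤ δ := hx
    have h3 : δ < δ₂ := lt_of_le_of_lt (min_le_left _ _)
      (lt_of_le_of_lt (min_le_right _ _) (by linarith))
    exact Metric.mem_ball.2 (by linarith)
  have hx₀B : x₀ ∈ B := Metric.mem_closedBall_self hδ0.le
  have hδK' : K' * δ ≤ ε / 4 := by
    have h1 : δ ≤ ε / (4 * (K' + 1)) := min_le_right _ _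
    have h2 : K' * δ ≤ K' * (ε / (4 * (K' + 1))) :=
      mul_le_mul_of_nonneg_left h1 hK'0
    have h3 : K' * (ε / (4 * (K' + 1))) ≤ ε / 4 := by
      rw [mul_div_assoc', div_le_div_iff₀ (by positivity) (by norm_num)]
      nlinarith [hε.le, hK'0]
    linarith
  have hBdist : ∀ x ∈ B, dist x x₀ ≤ δ := fun x hx => hx
  have hBpair : ∀ x ∈ B, ∀ y ∈ B, dist x y ≤ 2 * δ := by
    intro x hx y hy
    calc dist x y ≤ dist x x₀ + dist y x₀ := dist_triangle_right x y x₀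
      _ ≤ 2 * δ := by linarith [hBdist x hx, hBdist y hy]
  clear_value C K' δ B
  -- coordinate bound
  have hcoord : ∀ (u : EuclideanSpace ℝ (Fin (m i))) (k : Fin (m i)), |u k| ≤ ‖u‖ :=
    fun u k => aux_abs_coord_le_norm u k
  -- basic Lipschitz estimates on B
  have hAe : ∀ x ∈ B, ∀ y ∈ B, ∀ r k, |A x r k - A y r k| ≤ KA * dist x y := by
    intro x hx y hy r k
    have h1 : dist (A x r k) (A y r k) ≤ dist (A x r) (A y r) :=
      dist_le_pi_dist (A x r) (A y r) k
    have h2 : dist (A x r) (A y r) ≤ dist (A x) (A y) := dist_le_pi_dist (A x) (A y) r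
    have h3 := hLA.dist_le_mul x (hBtA x hx) y (hBtA y hy)
    rw [Real.dist_eq] at h1
    linarith
  have hbe : ∀ x ∈ B, ∀ y ∈ B, ∀ r, |b x r - b y r| ≤ Kb * dist x y := by
    intro x hx y hy r
    have h1 : dist (b x r) (b y r) ≤ dist (b x) (b y) := dist_le_pi_dist (b x) (b y) r
    have h3 := hLb.dist_le_mul x (hBtb x hx) y (hBtb y hy)
    rw [Real.dist_eq] at h1
    linarith
  -- factA : constraint row comparison for bounded u
  have factA : ∀ x ∈ B, ∀ y ∈ B, ∀ u : EuclideanSpace ℝ (Fin (m i)), ‖u‖ ≤ M →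
      ∀ r, ∑ k, A x r k * u k ≤ (∑ k, A y r k * u k) + KA * (m i) * M * dist x y := by
    intro x hx y hy u hu r
    have key : ∀ k : Fin (m i), A x r k * u k ≤ A y r k * u k + KA * dist x y * M := by
      intro k
      have h1 : (A x r k - A y r k) * u k ≤ |A x r k - A y r k| * |u k| := by
        calc (A x r k - A y r k) * u k ≤ |(A x r k - A y r k) * u k| := le_abs_self _
          _ = |A x r k - A y r k| * |u k| := abs_mul _ _
      have h2 : |A x r k - A y r k| * |u k| ≤ (KA * dist x y) * M :=
        mul_le_mul (hAe x hx y hy r k) ((hcoord u k).trans hu) (abs_nonneg _)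
          (by positivity)
      nlinarith
    calc ∑ k, A x r k * u k ≤ ∑ k, (A y r k * u k + KA * dist x y * M) :=
          Finset.sum_le_sum fun k _ => key k
      _ = (∑ k, A y r k * u k) + (m i) * (KA * dist x y * M) := by
          rw [Finset.sum_add_distrib, Finset.sum_const, Finset.card_univ,
            Fintype.card_fin, nsmul_eq_mul]
      _ = (∑ k, A y r k * u k) + KA * (m i) * M * dist x y := by ring
  -- constraint transfer
  have fact1 : ∀ x ∈ B, ∀ y ∈ B, ∀ u ∈ U y, ∀ r,
      ∑ k, A x r k * u k ≤ b x r + K' * dist x y := by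
    intro x hx y hy u hu r
    have huM : ‖u‖ ≤ M := hM u (hUC y (hBNx y hy) hu)
    have h1 := factA x hx y hy u huM r
    have h2 : ∑ k, A y r k * u k ≤ b y r := by
      rw [hU] at hu; exact hu r
    have h3 : b y r ≤ b x r + Kb * dist x y := by
      have := hbe x hx y hy r
      rw [abs_sub_le_iff] at this
      linarith [this.2, dist_comm x y]
    rw [hK'_def]
    nlinarith [dist_nonneg (x := x) (y := y)]
  -- Slater point is robustly feasible on B
  have fact2 : ∀ x ∈ B, ∀ r, ∑ k, A x r k * u₀ k ≤ b x r - ε / 2 := by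
    intro x hx r
    have h1 := factA x hx x₀ hx₀B u₀ hu₀M r
    have h2 := hmargin r
    have h3 : b x₀ r ≤ b x r + Kb * dist x x₀ := by
      have := hbe x hx x₀ hx₀B r
      rw [abs_sub_le_iff] at this
      linarith [this.2]
    have hd : dist x x₀ ≤ δ := hBdist x hx
    have h4 : KA * (m i) * M * dist x x₀ + Kb * dist x x₀ ≤ K' * δ := by
      have : 0 ≤ KA * (m i) * M := by positivity
      have hKb : (0:ℝ) ≤ Kb := Kb.2
      rw [hK'_def]; nlinarith
    linarith
  have hu₀feas : ∀ x ∈ B, u₀ ∈ U x := by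
    intro x hx
    rw [hU]
    intro r
    have := fact2 x hx r
    linarith
  -- bounds for the objective ingredients on B
  set Dψ := fderiv ℝ ψ with hD_def
  set Mψ : ℝ := ‖Dψ x₀‖ + Kψ * δ with hMψ_def
  set Mf : ℝ := ‖f (x₀ i)‖ + Kf * δ with hMf_def
  set Mg : ℝ := ‖g (x₀ i)‖ + Kg * δ with hMg_def
  have hMψ0 : 0 ≤ Mψ := add_nonneg (norm_nonneg _) (mul_nonneg Kψ.2 hδ0.le)
  have hMf0 : 0 ≤ Mf := add_nonneg (norm_nonneg _) (mul_nonneg Kf.2 hδ0.le)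
  have hMg0 : 0 ≤ Mg := add_nonneg (norm_nonneg _) (mul_nonneg Kg.2 hδ0.le)
  have hDlip : ∀ x ∈ B, ∀ y ∈ B, ‖Dψ x - Dψ y‖ ≤ Kψ * dist x y := by
    intro x hx y hy
    have := hLψ.dist_le_mul x (hBtψ x hx) y (hBtψ y hy)
    rwa [dist_eq_norm] at this
  have hMψB : ∀ x ∈ B, ‖Dψ x‖ ≤ Mψ := by
    intro x hx
    have h1 := hDlip x hx x₀ hx₀B
    have h2 := norm_sub_norm_le (Dψ x) (Dψ x₀)
    have h3 : (Kψ : ℝ) * dist x x₀ ≤ Kψ * δ :=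
      mul_le_mul_of_nonneg_left (hBdist x hx) Kψ.2
    rw [hMψ_def]; linarith
  have hflip : ∀ x ∈ B, ∀ y ∈ B, ‖f (x i) - f (y i)‖ ≤ Kf * dist x y := by
    intro x hx y hy
    have h1 := hLf.dist_le_mul (x i) (hBi x hx).1 (y i) (hBi y hy).1
    rw [dist_eq_norm] at h1
    have h2 : (Kf : ℝ) * dist (x i) (y i) ≤ Kf * dist x y :=
      mul_le_mul_of_nonneg_left (dist_le_pi_dist x y i) Kf.2
    linarith
  have hMfB : ∀ x ∈ B, ‖f (x i)‖ ≤ Mf := by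
    intro x hx
    have h1 := hflip x hx x₀ hx₀B
    have h2 := norm_sub_norm_le (f (x i)) (f (x₀ i))
    have h3 : (Kf : ℝ) * dist x x₀ ≤ Kf * δ :=
      mul_le_mul_of_nonneg_left (hBdist x hx) Kf.2
    rw [hMf_def]; linarith
  have hglip : ∀ x ∈ B, ∀ y ∈ B, ‖g (x i) - g (y i)‖ ≤ Kg * dist x y := by
    intro x hx y hy
    have h1 := hLg.dist_le_mul (x i) (hBi x hx).2 (y i) (hBi y hy).2
    rw [dist_eq_norm] at h1
    have h2 : (Kg : ℝ) * dist (x i) (y i) ≤ Kg * dist x y :=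
      mul_le_mul_of_nonneg_left (dist_le_pi_dist x y i) Kg.2
    linarith
  have hMgB : ∀ x ∈ B, ‖g (x i)‖ ≤ Mg := by
    intro x hx
    have h1 := hglip x hx x₀ hx₀B
    have h2 := norm_sub_norm_le (g (x i)) (g (x₀ i))
    have h3 : (Kg : ℝ) * dist x x₀ ≤ Kg * δ :=
      mul_le_mul_of_nonneg_left (hBdist x hx) Kg.2
    rw [hMg_def]; linarith
  -- feasibility transfer
  set L : ℝ := 4 * M * K' / ε with hL_def
  have hL0 : 0 ≤ L := by
    rw [hL_def]
    exact div_nonneg (mul_nonneg (mul_nonneg (by norm_num) hM0) hK'0) hε.le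
  have fact3 : ∀ x ∈ B, ∀ y ∈ B, ∀ u ∈ U y, ∃ u' ∈ U x,
      ‖u' - u‖ ≤ L * dist x y := by
    intro x hx y hy u hu
    set θ : ℝ := 2 * K' * dist x y / ε with hθ_def
    have hd0 : (0:ℝ) ≤ dist x y := dist_nonneg
    have hθ0 : 0 ≤ θ := by
      rw [hθ_def]
      exact div_nonneg (mul_nonneg (mul_nonneg (by norm_num) hK'0) hd0) hε.le
    have hθ1 : θ ≤ 1 := by
      rw [hθ_def, div_le_one hε]
      nlinarith [hδK', hK'0, hBpair x hx y hy]
    refine ⟨u + θ • (u₀ - u), ?_, ?_⟩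
    · rw [hU]
      intro r
      have hcoordsum : ∑ k, A x r k * (u + θ • (u₀ - u)) k
          = (1 - θ) * (∑ k, A x r k * u k) + θ * (∑ k, A x r k * u₀ k) := by
        rw [Finset.mul_sum, Finset.mul_sum, ← Finset.sum_add_distrib]
        apply Finset.sum_congr rfl
        intro k _
        have hk : (u + θ • (u₀ - u)) k = u k + θ * (u₀ k - u k) := rfl
        rw [hk]; ring
      show ∑ k, A x r k * (u + θ • (u₀ - u)) k ≤ b x r
      rw [hcoordsum]
      have h1 : ∑ k, A x r k * u k ≤ b x r + K' * dist x y := fact1 x hx y hy u hu r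
      have h2 : ∑ k, A x r k * u₀ k ≤ b x r - ε / 2 := fact2 x hx r
      have e1 : (1-θ) * (∑ k, A x r k * u k) ≤ (1-θ) * (b x r + K' * dist x y) :=
        mul_le_mul_of_nonneg_left h1 (by linarith)
      have e2 : θ * (∑ k, A x r k * u₀ k) ≤ θ * (b x r - ε/2) :=
        mul_le_mul_of_nonneg_left h2 hθ0
      have hθε : θ * (ε/2) = K' * dist x y := by
        rw [hθ_def]; field_simp
      nlinarith [hK'0, hd0, hθ0, hθ1, e1, e2, hθε,
        mul_nonneg (mul_nonneg hθ0 hK'0) hd0]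
    · have hcanc : u + θ • (u₀ - u) - u = θ • (u₀ - u) := by abel
      rw [hcanc, norm_smul, Real.norm_eq_abs, abs_of_nonneg hθ0]
      have hn : ‖u₀ - u‖ ≤ 2 * M := by
        have h1 : ‖u‖ ≤ M := hM u (hUC y (hBNx y hy) hu)
        calc ‖u₀ - u‖ ≤ ‖u₀‖ + ‖u‖ := norm_sub_le _ _
          _ ≤ 2*M := by linarith
      calc θ * ‖u₀ - u‖ ≤ θ * (2*M) := mul_le_mul_of_nonneg_left hn hθ0
        _ = L * dist x y := by rw [hθ_def, hL_def]; field_simp; ring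
  -- the Lipschitz constant for the value function
  set Ktot : ℝ := Kψ*Mf + Mψ*Kf + Kψ*(Mg*M) + Mψ*(Kg*M + Mg*L) with hKtot_def
  have hKtot0 : 0 ≤ Ktot := by
    rw [hKtot_def]
    have h1 : (0:ℝ) ≤ (Kψ:ℝ) := Kψ.2
    have h2 : (0:ℝ) ≤ (Kf:ℝ) := Kf.2
    have h3 : (0:ℝ) ≤ (Kg:ℝ) := Kg.2
    have := mul_nonneg hMg0 hL0
    have := mul_nonneg h3 hM0
    nlinarith [mul_nonneg h1 hMf0, mul_nonneg hMψ0 h2, mul_nonneg (mul_nonneg h1 hMg0) hM0,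
      mul_nonneg hMψ0 (add_nonneg (mul_nonneg h3 hM0) (mul_nonneg hMg0 hL0))]
  -- joint objective estimate
  have hFlip : ∀ x ∈ B, ∀ y ∈ B, ∀ u u' : EuclideanSpace ℝ (Fin (m i)),
      ‖u‖ ≤ M → ‖u'‖ ≤ M → ‖u' - u‖ ≤ L * dist x y →
      |F x u' - F y u| ≤ Ktot * dist x y := by
    intro x hx y hy u u' huM hu'M huu'
    have hd0 : (0:ℝ) ≤ dist x y := dist_nonneg
    have hsplit : F x u' - F y u =
        (Dψ x (Pi.single i (f (x i))) - Dψ y (Pi.single i (f (y i)))) +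
        (Dψ x (Pi.single i (g (x i) u')) - Dψ y (Pi.single i (g (y i) u))) := by
      simp only [hF_def, hD_def]; ring
    have est1 : |Dψ x (Pi.single i (f (x i))) - Dψ y (Pi.single i (f (y i)))| ≤
        ‖Dψ x - Dψ y‖ * ‖f (x i)‖ + ‖Dψ y‖ * ‖f (x i) - f (y i)‖ := by
      have h := aux_op_est (Dψ x) (Dψ y) (Pi.single i (f (x i)))
        (Pi.single i (f (y i)))
      rwa [← Pi.single_sub, Pi.norm_single, Pi.norm_single] at h
    have est2 : |Dψ x (Pi.single i (g (x i) u')) - Dψ y (Pi.single i (g (y i) u))| ≤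
        ‖Dψ x - Dψ y‖ * ‖g (x i) u'‖ + ‖Dψ y‖ * ‖g (x i) u' - g (y i) u‖ := by
      have h := aux_op_est (Dψ x) (Dψ y) (Pi.single i (g (x i) u'))
        (Pi.single i (g (y i) u))
      rwa [← Pi.single_sub, Pi.norm_single, Pi.norm_single] at h
    have hDxy := hDlip x hx y hy
    have hDy := hMψB y hy
    have hfx := hMfB x hx
    have hfxy := hflip x hx y hy
    have hgu' : ‖g (x i) u'‖ ≤ Mg * M :=
      ((g (x i)).le_opNorm u').trans
        (mul_le_mul (hMgB x hx) hu'M (norm_nonneg _) hMg0)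
    have hguu : ‖g (x i) u' - g (y i) u‖ ≤ (Kg * dist x y) * M + Mg * (L * dist x y) := by
      have hsplit2 : g (x i) u' - g (y i) u = (g (x i) - g (y i)) u' + g (y i) (u' - u) := by
        simp only [ContinuousLinearMap.sub_apply, map_sub]; abel
      rw [hsplit2]
      have a1 : ‖(g (x i) - g (y i)) u'‖ ≤ (Kg * dist x y) * M :=
        ((g (x i) - g (y i)).le_opNorm u').trans
          (mul_le_mul (hglip x hx y hy) hu'M (norm_nonneg _)
            (mul_nonneg Kg.2 hd0))
      have a2 : ‖g (y i) (u' - u)‖ ≤ Mg * (L * dist x y) :=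
        ((g (y i)).le_opNorm (u' - u)).trans
          (mul_le_mul (hMgB y hy) huu' (norm_nonneg _) hMg0)
      calc ‖(g (x i) - g (y i)) u' + g (y i) (u' - u)‖
          ≤ ‖(g (x i) - g (y i)) u'‖ + ‖g (y i) (u' - u)‖ := norm_add_le _ _
        _ ≤ _ := add_le_add a1 a2
    -- combine
    have p1 : ‖Dψ x - Dψ y‖ * ‖f (x i)‖ ≤ (Kψ * dist x y) * Mf :=
      mul_le_mul hDxy hfx (norm_nonneg _) (mul_nonneg Kψ.2 hd0)
    have p2 : ‖Dψ y‖ * ‖f (x i) - f (y i)‖ ≤ Mψ * (Kf * dist x y) :=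
      mul_le_mul hDy hfxy (norm_nonneg _) hMψ0
    have p3 : ‖Dψ x - Dψ y‖ * ‖g (x i) u'‖ ≤ (Kψ * dist x y) * (Mg * M) :=
      mul_le_mul hDxy hgu' (norm_nonneg _) (mul_nonneg Kψ.2 hd0)
    have p4 : ‖Dψ y‖ * ‖g (x i) u' - g (y i) u‖ ≤
        Mψ * ((Kg * dist x y) * M + Mg * (L * dist x y)) :=
      mul_le_mul hDy hguu (norm_nonneg _) hMψ0
    have habs : |F x u' - F y u| ≤
        |Dψ x (Pi.single i (f (x i))) - Dψ y (Pi.single i (f (y i)))| +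
        |Dψ x (Pi.single i (g (x i) u')) - Dψ y (Pi.single i (g (y i) u))| := by
      rw [hsplit]; exact abs_add_le _ _
    rw [hKtot_def]
    nlinarith [est1, est2, p1, p2, p3, p4, habs]
  -- put everything together
  have hBmem : B ∈ nhds x₀ := by
    rw [hB_def]; exact Metric.closedBall_mem_nhds x₀ hδ0
  have htmem : B ∩ SI ∈ nhdsWithin x₀ SI :=
    Filter.inter_mem (mem_nhdsWithin_of_mem_nhds hBmem) self_mem_nhdsWithin
  set MF : ℝ := Mψ * Mf + Mψ * (Mg * M) with hMF_def
  have hbd : ∀ x ∈ B ∩ SI, ∀ u ∈ U x, |F x u| ≤ MF := by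
    intro x hx u hu
    have huM : ‖u‖ ≤ M := hM u (hUC x (hBNx x hx.1) hu)
    have b1 : |Dψ x (Pi.single i (f (x i)))| ≤ Mψ * Mf := by
      have h := (Dψ x).le_opNorm (Pi.single i (f (x i)))
      rw [Pi.norm_single, Real.norm_eq_abs] at h
      exact h.trans (mul_le_mul (hMψB x hx.1) (hMfB x hx.1) (norm_nonneg _) hMψ0)
    have b2 : |Dψ x (Pi.single i (g (x i) u))| ≤ Mψ * (Mg * M) := by
      have h := (Dψ x).le_opNorm (Pi.single i (g (x i) u))
      rw [Pi.norm_single, Real.norm_eq_abs] at h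
      have h2 : ‖g (x i) u‖ ≤ Mg * M :=
        ((g (x i)).le_opNorm u).trans
          (mul_le_mul (hMgB x hx.1) huM (norm_nonneg _) hMg0)
      exact h.trans ((mul_le_mul (hMψB x hx.1) h2 (norm_nonneg _) hMψ0))
    have : |F x u| ≤ |Dψ x (Pi.single i (f (x i)))| + |Dψ x (Pi.single i (g (x i) u))| := by
      simp only [hF_def, hD_def]
      exact abs_add_le _ _
    rw [hMF_def]
    simp only [hD_def] at b1 b2 this
    linarith
  have hne : ∀ x ∈ B ∩ SI, (U x).Nonempty := fun x hx => ⟨u₀, hu₀feas x hx.1⟩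
  have hFkey : ∀ x ∈ B ∩ SI, ∀ y ∈ B ∩ SI, ∀ u ∈ U y, ∃ u' ∈ U x,
      |F x u' - F y u| ≤ (Ktot.toNNReal : ℝ) * dist x y := by
    intro x hx y hy u hu
    obtain ⟨u', hu'U, hu'd⟩ := fact3 x hx.1 y hy.1 u hu
    refine ⟨u', hu'U, ?_⟩
    have huM : ‖u‖ ≤ M := hM u (hUC y (hBNx y hy.1) hu)
    have hu'M : ‖u'‖ ≤ M := hM u' (hUC x (hBNx x hx.1) hu'U)
    have := hFlip x hx.1 y hy.1 u u' huM hu'M hu'd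
    rwa [Real.coe_toNNReal _ hKtot0]
  obtain ⟨hlip1, hlip2⟩ := aux_lip_value F U (B ∩ SI) Ktot.toNNReal hne MF hbd hFkey
  exact ⟨Ktot.toNNReal, B ∩ SI, htmem, hlip1, hlip2⟩
end

section
/- Consider the multi-agent sampled-data system with asynchronous sampling times t_i^{k+1} − t_i^k = Γ_i + δ_i(k), ‖δ_i(k)‖ ≤ δ^max, and a safe set function h of relative degree q > 1 with respect to the dynamics, with the chain ψ_0^d = h, ψ_1^d = Σ_i L_{f_i}h^{x_i} + ξ + α_1(ψ_0^d), ψ_j^d = ψ̇_{j−1}^d + α_j(ψ_{j−1}^d) for 2 ≤ j ≤ q, where all agents' inputs appear simultaneously and for the first time in ψ_q^d, ψ_{q−1}^d ∈ C^{1,1}_loc, and ‖Σ_{l∈V} L_{φ_l}h^{x_l}(x⃗)‖ ≤ ξ along the trajectory. Suppose the trajectory remains in a region where the Lemma-2 bound ‖x⃗(t) − x⃗^{k_i}‖ ≤ ε(Γ_i + δ^max) and the Lemma-6 Lipschitz constants c_f', c_g', c_α', c_{γ̂}' on S_I^d are valid, ‖u_l‖ ≤ u_max for normal inputs, and η'(Γ)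 = (c_f' + c_g' u_max + c_α' + c_{γ̂}')ε(Γ). If at sampling time t_i^k the state satisfies x⃗^{k_i} = x⃗(t_i^k) ∈ S_I^d and agent i's held input satisfies u_i^{k_i} ∈ K_i^ψ(x⃗^{k_i}) = {u_i ∈ U_i : L_{f_i}(ψ_{q−1}^d)^{x_i}(x⃗^{k_i}) + L_{g_i}(ψ_{q−1}^d)^{x_i}(x⃗^{k_i})u_i + Σ_{l∈N\{i}}[L_{f_l}(ψ_{q−1}^d)^{x_l}(x⃗^{k_i}) + L_{g_l}(ψ_{q−1}^d)^{x_l}(x⃗^{k_i})û_l^{k_i}] + Σ_{j∈A} γ̂_j^max(x⃗^{k_i}) + α_q(ψ_{q−1}^d(x⃗^{k_i})) + η'(Γ_i + δ^max) ≤ 0}, where the û_l^{k_i} are the inputs actually applied by the other normal agents on this interval, then x⃗(t) ∈ S_I^d = ∩_{k=1}^q {ψ_{k−1}^d ≤ 0} for all t ∈ [t_i^k, t_i^{k+1}). -/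
set_option autoImplicit false

open Set


lemma nonpos_on_Ico_of_deriv (a b : ℝ) (y y' : ℝ → ℝ)
    (hy : ∀ t ∈ Ico a b, HasDerivAt y (y' t) t)
    (h0 : y a ≤ 0)
    (hdec : ∀ t ∈ Ico a b, 0 ≤ y t → y' t ≤ 0) :
    ∀ t ∈ Ico a b, y t ≤ 0 := by
  intro t0 ht0
  by_contra hpos
  push_neg at hpos
  have hat0 : a < t0 := by
    rcases eq_or_lt_of_le ht0.1 with rfl | h
    · linarith
    · exact h
  -- the set of times ≤ t0 where y ≤ 0
  set S : Set ℝ := {t | t ∈ Icc a t0 ∧ y t ≤ 0} with hS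
  have hSsub : ∀ t ∈ Icc a t0, t ∈ Ico a b := fun t ht =>
    ⟨ht.1, lt_of_le_of_lt ht.2 ht0.2⟩
  have hSne : S.Nonempty := ⟨a, ⟨le_refl a, le_of_lt hat0⟩, h0⟩
  have hSbdd : BddAbove S := ⟨t0, fun t ht => ht.1.2⟩
  set s := sSup S with hs
  have hsmem_cl : s ∈ closure S := csSup_mem_closure hSne hSbdd
  have hsIcc : s ∈ Icc a t0 := by
    constructor
    · exact le_csSup hSbdd ⟨⟨le_refl a, le_of_lt hat0⟩, h0⟩
    · exact csSup_le hSne fun t ht => ht.1.2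
  have hcont_s : ContinuousAt y s := (hy s (hSsub s hsIcc)).continuousAt
  have hys : y s ≤ 0 := by
    by_contra hys
    push_neg at hys
    have hev : ∀ᶠ z in nhds s, 0 < y z := hcont_s (Ioi_mem_nhds hys)
    rcases mem_closure_iff_nhds.1 hsmem_cl {z | 0 < y z} hev with ⟨z, hz1, hz2⟩
    exact absurd hz2.2 (not_le.2 hz1)
  have hst0 : s < t0 := lt_of_le_of_ne hsIcc.2 (fun he => absurd hys (by rw [he]; exact not_le.2 hpos))
  have hposIoc : ∀ z ∈ Ioc s t0, 0 < y z := by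
    intro z hz
    by_contra hyz
    push_neg at hyz
    have : z ∈ S := ⟨⟨le_trans hsIcc.1 (le_of_lt hz.1), hz.2⟩, hyz⟩
    exact absurd (le_csSup hSbdd this) (not_le.2 hz.1)
  have hanti : AntitoneOn y (Icc s t0) := by
    apply antitoneOn_of_deriv_nonpos (convex_Icc s t0)
    · intro z hz
      exact (hy z (hSsub z ⟨le_trans hsIcc.1 hz.1, hz.2⟩)).continuousAt.continuousWithinAt
    · intro z hz
      rw [interior_Icc] at hz
      exact (hy z (hSsub z ⟨le_trans hsIcc.1 (le_of_lt hz.1), le_of_lt hz.2⟩)).differentiableAt.differentiableWithinAt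
    · intro z hz
      rw [interior_Icc] at hz
      have hmem := hSsub z ⟨le_trans hsIcc.1 (le_of_lt hz.1), le_of_lt hz.2⟩
      rw [(hy z hmem).deriv]
      exact hdec z hmem (le_of_lt (hposIoc z ⟨hz.1, le_of_lt hz.2⟩))
  have := hanti ⟨le_refl s, le_of_lt hst0⟩ ⟨le_of_lt hst0, le_refl t0⟩ (le_of_lt hst0)
  linarith

set_option maxHeartbeats 1000000 in
/-- **Theorem 4 of the paper.** Asynchronous sampled-data multi-agent
system with a safe set function `h` of relative degree `q > 1`, chain
`ψ₀^d = h`, `ψ₁^d = Σᵢ L_{f_i}h^{x_i} + ξ + α₁(ψ₀^d)`,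
`ψⱼ^d = ψ̇_{j−1}^d + αⱼ(ψ_{j−1}^d)` (2 ≤ j ≤ q, the inputs appearing for the first
time in `ψ_q^d`), `ψ_{q−1}^d ∈ C^{1,1}_loc`, and disturbance bound
`‖Σ_l L_{φ_l}h^{x_l}(x)‖ ≤ ξ` along the trajectory.  Under the Lemma-2 deviation
bound `ε(Γ_i + δ^max)` and the Lemma-6 Lipschitz constants, with
`η'(Γ) = (c_f' + c_g' u_max + c_α' + c_γ̂') ε(Γ)`, if the sampled state
`x^{k_i} = x(t_i^k)` lies in `S_I^d = ∩_{j=1}^q {ψ_{j−1}^d ≤ 0}` and agent `i`'s held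
input lies in `K_i^ψ(x^{k_i})`, then `x(t) ∈ S_I^d` for all `t ∈ [t_i^k, t_i^{k+1})`. -/
theorem theorem4_high_relative_degree_safety (N : ℕ) (n m : Fin N → ℕ)
    (Normal Adv : Finset (Fin N))
    (hpart : Normal ∪ Adv = Finset.univ) (hdisj : Disjoint Normal Adv)
    (i : Fin N) (hiN : i ∈ Normal)
    -- safe set function and class-K∞ functions
    (h : (∀ l, EuclideanSpace ℝ (Fin (n l))) → ℝ) (hC1 : ContDiff ℝ 1 h)
    (q : ℕ) (hq : 1 < q)
    (α : ℕ → ℝ → ℝ)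
    (hα_lip : ∀ j, 1 ≤ j → j ≤ q → LocallyLipschitz (α j))
    (hα_mono : ∀ j, 1 ≤ j → j ≤ q → StrictMono (α j))
    (hα0 : ∀ j, 1 ≤ j → j ≤ q → α j 0 = 0)
    -- dynamics data
    (f : ∀ l, EuclideanSpace ℝ (Fin (n l)) → EuclideanSpace ℝ (Fin (n l)))
    (g : ∀ l, EuclideanSpace ℝ (Fin (n l)) →
      (EuclideanSpace ℝ (Fin (m l)) →L[ℝ] EuclideanSpace ℝ (Fin (n l))))
    (hf : ∀ l, LocallyLipschitz (f l)) (hg : ∀ l, LocallyLipschitz (g l))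
    (φ : ∀ l : Fin N, ℝ → EuclideanSpace ℝ (Fin (n l))) (φmax : Fin N → ℝ)
    (hφ : ∀ l, ∀ t : ℝ, 0 ≤ t → ‖φ l t‖ ≤ φmax l)
    -- feasible input sets
    (U : ∀ l : Fin N, (∀ j, EuclideanSpace ℝ (Fin (n j))) →
      Set (EuclideanSpace ℝ (Fin (m l))))
    (hUcomp : ∀ l y, IsCompact (U l y)) (hUne : ∀ l y, (U l y).Nonempty)
    -- the chain ψ⁰ = h, ψ¹ = Σ L_f h + ξ + α₁(h), relative degree q > 1
    (ψ : ℕ → (∀ l, EuclideanSpace ℝ (Fin (n l))) → ℝ)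
    (hψ0 : ψ 0 = h)
    (ch ξ : ℝ) (hξdef : ξ = ch * ∑ l, φmax l)
    (hψ1 : ∀ y, ψ 1 y =
      (∑ l, fderiv ℝ h y (Pi.single l (f l (y l)))) + ξ + α 1 (h y))
    (hψC1 : ContDiff ℝ 1 (ψ (q - 1)))
    (hψC11 : LocallyLipschitz (fderiv ℝ (ψ (q - 1))))
    -- the inputs are absent from ψʲ for all j < q (they appear first in ψ^q)
    (hreldeg : ∀ j, j + 1 < q → ∀ (y : ∀ l, EuclideanSpace ℝ (Fin (n l))) (l : Fin N)
      (u : EuclideanSpace ℝ (Fin (m l))),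
        fderiv ℝ (ψ j) y (Pi.single l (g l (y l) u)) = 0)
    -- agent i's sampling interval
    (tk tk1 Γi δ δmax : ℝ) (hΓi : 0 < Γi) (hδ : ‖δ‖ ≤ δmax) (hδmax : 0 ≤ δmax)
    (hstep : tk1 = tk + Γi + δ) (htk : 0 ≤ tk) (hlt : tk < tk1)
    -- trajectory, held inputs, and dynamics on the interval
    (x : ℝ → ∀ l, EuclideanSpace ℝ (Fin (n l)))
    (uhat : ∀ l, EuclideanSpace ℝ (Fin (m l)))
    (hdyn : ∀ t ∈ Ico tk tk1,
      HasDerivAt x (fun l => f l (x t l) + g l (x t l) (uhat l) + φ l t) t)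
    (umax : ℝ) (humax : 0 ≤ umax)
    (hfeasN : ∀ l ∈ Normal, ‖uhat l‖ ≤ umax)
    (hfeasi : uhat i ∈ U i (x tk))
    (hfeasA : ∀ j ∈ Adv, uhat j ∈ U j (x tk))
    -- disturbance bound of Lemma 4 along the trajectory
    (hξ : ∀ t ∈ Ico tk tk1,
      ‖∑ l, fderiv ℝ h (x t) (Pi.single l (φ l t))‖ ≤ ξ)
    -- intermediate chain relations ψʲ = ψ̇^{j−1} + αⱼ(ψ^{j−1}) along the trajectory
    (hchain : ∀ r, 1 ≤ r → r + 1 < q → ∀ t ∈ Ico tk tk1,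
      HasDerivAt (fun s => ψ r (x s))
        (ψ (r + 1) (x t) - α (r + 1) (ψ r (x t))) t)
    -- top-level chain relation: ψ̇^{q−1} expands affinely in the held inputs
    (hchainq : ∀ t ∈ Ico tk tk1,
      HasDerivAt (fun s => ψ (q - 1) (x s))
        (∑ l, (fderiv ℝ (ψ (q - 1)) (x t) (Pi.single l (f l (x t l))) +
          fderiv ℝ (ψ (q - 1)) (x t) (Pi.single l (g l (x t l) (uhat l))))) t)
    -- Lemma-2 deviation bound with ε(Γ_i + δ^max)
    (μ L' : ℝ) (hμ : 0 ≤ μ) (hL' : 0 < L')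
    (hdev : ∀ t ∈ Ico tk tk1,
      ‖x t - x tk‖ ≤ μ / L' * (Real.exp (L' * (Γi + δmax)) - 1))
    -- Lemma-6 Lipschitz constants valid along the interval
    (cf' cg' cα' cγ' : ℝ)
    (hcf : 0 ≤ cf') (hcg : 0 ≤ cg') (hcα : 0 ≤ cα') (hcγ : 0 ≤ cγ')
    (hLf : ∀ t ∈ Ico tk tk1,
      ∑ l ∈ Normal, ‖fderiv ℝ (ψ (q - 1)) (x t) (Pi.single l (f l (x t l))) -
          fderiv ℝ (ψ (q - 1)) (x tk) (Pi.single l (f l (x tk l)))‖ ≤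
        cf' * ‖x t - x tk‖)
    (hLg : ∀ t ∈ Ico tk tk1,
      ∑ l ∈ Normal, ‖fderiv ℝ (ψ (q - 1)) (x t) (Pi.single l (g l (x t l) (uhat l))) -
          fderiv ℝ (ψ (q - 1)) (x tk) (Pi.single l (g l (x tk l) (uhat l)))‖ ≤
        cg' * umax * ‖x t - x tk‖)
    (hαlip : ∀ t ∈ Ico tk tk1,
      ‖α q (ψ (q - 1) (x t)) - α q (ψ (q - 1) (x tk))‖ ≤ cα' * ‖x t - x tk‖)
    (hγlip : ∀ t ∈ Ico tk tk1,
      ∑ j ∈ Adv, ‖sSup ((fun v => fderiv ℝ (ψ (q - 1)) (x t) (Pi.single j (f j (x t j))) +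
            fderiv ℝ (ψ (q - 1)) (x t) (Pi.single j (g j (x t j) v))) '' U j (x t)) -
          sSup ((fun v => fderiv ℝ (ψ (q - 1)) (x tk) (Pi.single j (f j (x tk j))) +
            fderiv ℝ (ψ (q - 1)) (x tk) (Pi.single j (g j (x tk j) v))) '' U j (x tk))‖ ≤
        cγ' * ‖x t - x tk‖)
    -- adversarial actions dominated by γ̂ⱼ^max along the interval
    (hγub : ∀ t ∈ Ico tk tk1, ∀ j ∈ Adv,
      fderiv ℝ (ψ (q - 1)) (x t) (Pi.single j (f j (x t j))) +
          fderiv ℝ (ψ (q - 1)) (x t) (Pi.single j (g j (x t j) (uhat j))) ≤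
        sSup ((fun v => fderiv ℝ (ψ (q - 1)) (x t) (Pi.single j (f j (x t j))) +
            fderiv ℝ (ψ (q - 1)) (x t) (Pi.single j (g j (x t j) v))) '' U j (x t)))
    -- sampled state lies in S_I^d
    (hxk : ∀ j < q, ψ j (x tk) ≤ 0)
    -- u_i^{k_i} ∈ K_i^ψ(x^{k_i}) with margin η'(Γ_i + δ^max)
    (hK : (fderiv ℝ (ψ (q - 1)) (x tk) (Pi.single i (f i (x tk i))) +
            fderiv ℝ (ψ (q - 1)) (x tk) (Pi.single i (g i (x tk i) (uhat i)))) +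
          (∑ l ∈ Normal.erase i,
            (fderiv ℝ (ψ (q - 1)) (x tk) (Pi.single l (f l (x tk l))) +
              fderiv ℝ (ψ (q - 1)) (x tk) (Pi.single l (g l (x tk l) (uhat l))))) +
          (∑ j ∈ Adv, sSup ((fun v =>
            fderiv ℝ (ψ (q - 1)) (x tk) (Pi.single j (f j (x tk j))) +
              fderiv ℝ (ψ (q - 1)) (x tk) (Pi.single j (g j (x tk j) v))) '' U j (x tk))) +
          α q (ψ (q - 1) (x tk)) +
          (cf' + cg' * umax + cα' + cγ') *
            (μ / L' * (Real.exp (L' * (Γi + δmax)) - 1)) ≤ 0) :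
    ∀ t ∈ Ico tk tk1, ∀ j < q, ψ j (x t) ≤ 0 := by
  
  -- notation
  set E : ℝ := μ / L' * (Real.exp (L' * (Γi + δmax)) - 1) with hE
  have hE0 : (0:ℝ) ≤ E := by
    have h1 : (0:ℝ) ≤ L' * (Γi + δmax) := mul_nonneg hL'.le (by linarith)
    have h2 := Real.add_one_le_exp (L' * (Γi + δmax))
    have : (0:ℝ) ≤ Real.exp (L' * (Γi + δmax)) - 1 := by linarith
    exact mul_nonneg (div_nonneg hμ hL'.le) this
  set Lf : Fin N → ℝ → ℝ :=
    fun l s => fderiv ℝ (ψ (q - 1)) (x s) (Pi.single l (f l (x s l))) with hLfdef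
  set Lg : Fin N → ℝ → ℝ :=
    fun l s => fderiv ℝ (ψ (q - 1)) (x s) (Pi.single l (g l (x s l) (uhat l))) with hLgdef
  set Sp : Fin N → ℝ → ℝ :=
    fun j s => sSup ((fun v => fderiv ℝ (ψ (q - 1)) (x s) (Pi.single j (f j (x s j))) +
      fderiv ℝ (ψ (q - 1)) (x s) (Pi.single j (g j (x s j) v))) '' U j (x s)) with hSpdef
  -- Step A : ψ^{q-1} stays nonpositive
  have stepA : ∀ t ∈ Ico tk tk1, ψ (q - 1) (x t) ≤ 0 := by
    apply nonpos_on_Ico_of_deriv tk tk1 (fun s => ψ (q - 1) (x s))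
      (fun s => ∑ l, (Lf l s + Lg l s)) hchainq (hxk (q - 1) (by omega))
    intro t ht hyt
    have hΔ : ‖x t - x tk‖ ≤ E := hdev t ht
    have hsplit : ∑ l, (Lf l t + Lg l t) =
        ∑ l ∈ Normal, (Lf l t + Lg l t) + ∑ l ∈ Adv, (Lf l t + Lg l t) := by
      rw [← Finset.sum_union hdisj, hpart]
    -- normal agents
    have hN : ∑ l ∈ Normal, (Lf l t + Lg l t) ≤
        ∑ l ∈ Normal, (Lf l tk + Lg l tk) + (cf' + cg' * umax) * ‖x t - x tk‖ := by
      have h1 : ∑ l ∈ Normal, ((Lf l t - Lf l tk) + (Lg l t - Lg l tk)) ≤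
          ∑ l ∈ Normal, ‖Lf l t - Lf l tk‖ + ∑ l ∈ Normal, ‖Lg l t - Lg l tk‖ := by
        rw [← Finset.sum_add_distrib]
        refine Finset.sum_le_sum fun l _ => add_le_add ?_ ?_ <;>
          · rw [Real.norm_eq_abs]; exact le_abs_self _
      have h2 := hLf t ht
      have h3 := hLg t ht
      have h4 : ∑ l ∈ Normal, ((Lf l t - Lf l tk) + (Lg l t - Lg l tk)) =
          ∑ l ∈ Normal, (Lf l t + Lg l t) - ∑ l ∈ Normal, (Lf l tk + Lg l tk) := by
        rw [← Finset.sum_sub_distrib]; apply Finset.sum_congr rfl; intro l _; ring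
      rw [h4] at h1
      nlinarith [h1, h2, h3]
    -- adversarial agents
    have hA : ∑ j ∈ Adv, (Lf j t + Lg j t) ≤
        ∑ j ∈ Adv, Sp j tk + cγ' * ‖x t - x tk‖ := by
      have h1 : ∑ j ∈ Adv, (Lf j t + Lg j t) ≤ ∑ j ∈ Adv, Sp j t :=
        Finset.sum_le_sum fun j hj => hγub t ht j hj
      have h2 : ∑ j ∈ Adv, Sp j t - ∑ j ∈ Adv, Sp j tk ≤
          ∑ j ∈ Adv, ‖Sp j t - Sp j tk‖ := by
        rw [← Finset.sum_sub_distrib]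
        refine Finset.sum_le_sum fun j _ => ?_
        rw [Real.norm_eq_abs]; exact le_abs_self _
      have h3 := hγlip t ht
      linarith
    -- class-K bound
    have hαb : α q (ψ (q - 1) (x t)) - cα' * ‖x t - x tk‖ ≤ α q (ψ (q - 1) (x tk)) := by
      have h1 := hαlip t ht
      rw [Real.norm_eq_abs] at h1
      have := le_abs_self (α q (ψ (q - 1) (x t)) - α q (ψ (q - 1) (x tk)))
      linarith
    have hαnn : 0 ≤ α q (ψ (q - 1) (x t)) := by
      have h1 : α q 0 ≤ α q (ψ (q - 1) (x t)) :=
        (hα_mono q (by omega) le_rfl).monotone hyt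
      rwa [hα0 q (by omega) le_rfl] at h1
    -- rewrite hK
    have hKsum : ∑ l ∈ Normal, (Lf l tk + Lg l tk) + ∑ j ∈ Adv, Sp j tk +
        α q (ψ (q - 1) (x tk)) + (cf' + cg' * umax + cα' + cγ') * E ≤ 0 := by
      have h1 : ∑ l ∈ Normal, (Lf l tk + Lg l tk) =
          (Lf i tk + Lg i tk) + ∑ l ∈ Normal.erase i, (Lf l tk + Lg l tk) :=
        (Finset.add_sum_erase Normal _ hiN).symm
      rw [h1]
      exact hK
    have hmul : (cf' + cg' * umax + cα' + cγ') * ‖x t - x tk‖ ≤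
        (cf' + cg' * umax + cα' + cγ') * E :=
      mul_le_mul_of_nonneg_left hΔ (by positivity)
    rw [hsplit]
    nlinarith [hN, hA, hαb, hαnn, hKsum, hmul]
  -- Step B : downward induction through the chain, ranks 1 .. q-1
  have stepB : ∀ d : ℕ, 1 ≤ q - 1 - d → ∀ t ∈ Ico tk tk1, ψ (q - 1 - d) (x t) ≤ 0 := by
    intro d
    induction d with
    | zero => intro _ t ht; exact stepA t ht
    | succ d ih =>
      intro hd t ht
      set r := q - 1 - (d + 1) with hr
      have hr1 : 1 ≤ r := hd
      have hrq : r + 1 < q := by omega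
      have hq1d : q - 1 - d = r + 1 := by omega
      have ihr : ∀ s ∈ Ico tk tk1, ψ (r + 1) (x s) ≤ 0 := by
        intro s hs
        have := ih (by omega) s hs
        rwa [hq1d] at this
      refine nonpos_on_Ico_of_deriv tk tk1 (fun s => ψ r (x s))
        (fun s => ψ (r + 1) (x s) - α (r + 1) (ψ r (x s)))
        (fun s hs => hchain r hr1 hrq s hs) (hxk r (by omega)) ?_ t ht
      intro s hs hys
      have h1 : ψ (r + 1) (x s) ≤ 0 := ihr s hs
      have h2 : 0 ≤ α (r + 1) (ψ r (x s)) := by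
        have := (hα_mono (r + 1) (by omega) (by omega)).monotone hys
        rwa [hα0 (r + 1) (by omega) (by omega)] at this
      linarith
  have stepB' : ∀ r : ℕ, 1 ≤ r → r ≤ q - 1 → ∀ t ∈ Ico tk tk1, ψ r (x t) ≤ 0 := by
    intro r hr1 hr2 t ht
    have := stepB (q - 1 - r) (by omega) t ht
    have heq : q - 1 - (q - 1 - r) = r := by omega
    rwa [heq] at this
  -- Step C : rank 0, i.e. h itself
  have stepC : ∀ t ∈ Ico tk tk1, h (x t) ≤ 0 := by
    apply nonpos_on_Ico_of_deriv tk tk1 (fun s => h (x s))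
      (fun s => fderiv ℝ h (x s) (fun l => f l (x s l) + g l (x s l) (uhat l) + φ l s))
    · intro t ht
      have hdh : HasFDerivAt h (fderiv ℝ h (x t)) (x t) :=
        ((hC1.differentiable one_ne_zero) (x t)).hasFDerivAt
      exact hdh.comp_hasDerivAt t (hdyn t ht)
    · rw [← hψ0]; exact hxk 0 (by omega)
    · intro t ht hyt
      set v : ∀ l, EuclideanSpace ℝ (Fin (n l)) :=
        fun l => f l (x t l) + g l (x t l) (uhat l) + φ l t with hv
      have hdecomp : fderiv ℝ h (x t) v =
          ∑ l, fderiv ℝ h (x t) (Pi.single l (f l (x t l))) +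
          ∑ l, fderiv ℝ h (x t) (Pi.single l (g l (x t l) (uhat l))) +
          ∑ l, fderiv ℝ h (x t) (Pi.single l (φ l t)) := by
        have h1 : fderiv ℝ h (x t) v = ∑ l, fderiv ℝ h (x t) (Pi.single l (v l)) := by
          conv_lhs => rw [← Finset.univ_sum_single v]
          exact map_sum (fderiv ℝ h (x t)) _ _
        rw [h1, ← Finset.sum_add_distrib, ← Finset.sum_add_distrib]
        apply Finset.sum_congr rfl
        intro l _
        rw [hv]
        simp only [Pi.single_add, map_add]
      have hB : ∑ l, fderiv ℝ h (x t) (Pi.single l (g l (x t l) (uhat l))) = 0 := by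
        apply Finset.sum_eq_zero
        intro l _
        have := hreldeg 0 (by omega) (x t) l (uhat l)
        rwa [hψ0] at this
      have hA : ∑ l, fderiv ℝ h (x t) (Pi.single l (f l (x t l))) =
          ψ 1 (x t) - ξ - α 1 (h (x t)) := by
        have := hψ1 (x t); linarith
      have hC : ∑ l, fderiv ℝ h (x t) (Pi.single l (φ l t)) ≤ ξ := by
        have h1 := hξ t ht
        rw [Real.norm_eq_abs] at h1
        exact le_trans (le_abs_self _) h1
      have hψ1le : ψ 1 (x t) ≤ 0 := stepB' 1 le_rfl (by omega) t ht
      have hα1 : 0 ≤ α 1 (h (x t)) := by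
        have := (hα_mono 1 le_rfl (by omega)).monotone hyt
        rwa [hα0 1 le_rfl (by omega)] at this
      rw [hdecomp, hB]
      linarith
  -- conclusion
  intro t ht j hj
  rcases Nat.eq_zero_or_pos j with rfl | hj1
  · rw [hψ0]; exact stepC t ht
  · exact stepB' j hj1 (by omega) t ht
end
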